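/- arXiv:2602.24031 — 4 statements merged into one kernel-verified Lean document; each statement's English description precedes it below -/
import Mathlib

section
/- Let (b_i)_{i≥1} be positive integers (not assumed pairwise coprime). For each i fix pairwise distinct residues 0 ≤ r_i^{(0)}, …, r_i^{(c(i))} < b_i and set R_i := {r_i^{(k)} + j·b_i : 0 ≤ k ≤ c(i), j ≥ 1} ⊆ ℕ, with |R_i| := c(i)+1. If ∑_{i≥1} |R_i|/b_i < ∞, then the natural density of ℕ ∖ ⋃_{i≥1} R_i exists and equals lim_{L→∞} d(ℕ ∖ ⋃_{i=1}^{L} R_i) (this last limit exists since the finite-level densities are nonincreasing in L). -/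
open Filter Topology Finset

attribute [local instance] Classical.propDecidable

private lemma helper_tendsto {a : ℕ → ℝ} {α K : ℝ}
    (h : ∀ N : ℕ, |a N - ((N : ℝ) + 1) * α| ≤ K) :
    Tendsto (fun N : ℕ => a N / ((N : ℝ) + 1)) atTop (𝓝 α) := by
  have h0 : ∀ N : ℕ, (0 : ℝ) < (N : ℝ) + 1 := fun N => by positivity
  have hK : Tendsto (fun N : ℕ => K / ((N : ℝ) + 1)) atTop (𝓝 0) :=
    tendsto_const_nhds.div_atTop
      (tendsto_atTop_add_const_right _ _ tendsto_natCast_atTop_atTop)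
  have habs : Tendsto (fun N : ℕ => |a N / ((N : ℝ) + 1) - α|) atTop (𝓝 0) := by
    apply squeeze_zero (fun N => abs_nonneg _) _ hK
    intro N
    have he : a N / ((N : ℝ) + 1) - α = (a N - ((N : ℝ) + 1) * α) / ((N : ℝ) + 1) := by
      field_simp
    rw [he, abs_div, abs_of_pos (h0 N)]
    gcongr
    exact h N
  have h2 : Tendsto (fun N : ℕ => a N / ((N : ℝ) + 1) - α) atTop (𝓝 0) :=
    (tendsto_zero_iff_abs_tendsto_zero _).mpr habs
  have h3 := h2.add_const α
  simpa using h3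

private lemma helper_shift (p : ℕ → Prop) (P : ℕ)
    (hp : ∀ n, p (n + P) ↔ p n) : ∀ q n, p (n + q * P) ↔ p n := by
  intro q
  induction q with
  | zero => simp
  | succ q ih =>
    intro n
    have : n + (q + 1) * P = (n + q * P) + P := by ring
    rw [this, hp, ih]

private lemma helper_blocks (p : ℕ → Prop) [DecidablePred p] (P : ℕ)
    (hp : ∀ n, p (n + P) ↔ p n) (q : ℕ) :
    ((range (q * P)).filter p).card = q * ((range P).filter p).card := by
  induction q with
  | zero => simp
  | succ q ih =>
    have h1 : (q + 1) * P = q * P + P := by ring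
    rw [h1, Finset.range_add, filter_union, card_union_of_disjoint, ih]
    · rw [Finset.filter_map, Finset.card_map]
      have : Finset.filter (p ∘ ⇑(addLeftEmbedding (q * P))) (range P)
          = Finset.filter p (range P) := by
        apply filter_congr
        intro x _
        simp only [Function.comp, addLeftEmbedding_apply]
        rw [show q * P + x = x + q * P by ring, helper_shift p P hp q x]
      rw [this]; ring
    · rw [Finset.disjoint_left]
      intro x hx hx2
      simp only [mem_filter, Finset.mem_range, Finset.mem_map,
        addLeftEmbedding_apply] at hx hx2
      obtain ⟨⟨y, _, hy⟩, _⟩ := hx2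
      omega

private lemma helper_ltdiv (N P : ℕ) (hP : 0 < P) : N < (N / P + 1) * P := by
  have h1 := Nat.div_add_mod N P
  have h2 := Nat.mod_lt N hP
  calc N = P * (N / P) + N % P := h1.symm
    _ < P * (N / P) + P := Nat.add_lt_add_left h2 _
    _ = (N / P + 1) * P := by ring

private lemma helper_count_bound (p : ℕ → Prop) [DecidablePred p] (P : ℕ) (hP : 0 < P)
    (hp : ∀ n, p (n + P) ↔ p n) (N : ℕ) :
    |(((range N).filter p).card : ℝ) -
      (N : ℝ) * (((range P).filter p).card / (P : ℝ))| ≤ P := by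
  set m := ((range P).filter p).card with hm
  set q := N / P with hq
  have hlow : q * m ≤ ((range N).filter p).card := by
    rw [← helper_blocks p P hp q]
    apply Finset.card_le_card
    apply Finset.filter_subset_filter
    exact Finset.range_subset_range.2 (Nat.div_mul_le_self N P)
  have hhigh : ((range N).filter p).card ≤ q * m + m := by
    have h1 : N ≤ (q + 1) * P := by
      exact le_of_lt (hq ▸ helper_ltdiv N P hP)
    calc ((range N).filter p).card
        ≤ ((range ((q + 1) * P)).filter p).card := by
          apply Finset.card_le_card
          exact Finset.filter_subset_filter _ (Finset.range_subset_range.2 h1)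
      _ = (q + 1) * m := helper_blocks p P hp (q + 1)
      _ = q * m + m := by ring
  have hmP : m ≤ P := le_trans (Finset.card_filter_le _ _) (by simp)
  have hq1 : (q : ℝ) * P ≤ N := by exact_mod_cast Nat.div_mul_le_self N P
  have hq2 : (N : ℝ) < (q : ℝ) * P + P := by
    have h := helper_ltdiv N P hP
    have : (N : ℝ) < ((N / P + 1) * P : ℕ) := by exact_mod_cast h
    push_cast at this
    rw [hq]; linarith
  have hP' : (0 : ℝ) < P := by exact_mod_cast hP
  have hlow' : (q : ℝ) * m ≤ ((range N).filter p).card := by exact_mod_cast hlow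
  have hhigh' : (((range N).filter p).card : ℝ) ≤ q * m + m := by exact_mod_cast hhigh
  have hm' : (m : ℝ) ≤ P := by exact_mod_cast hmP
  have hm0 : (0 : ℝ) ≤ m := by positivity
  have key1 : (N : ℝ) * ((m : ℝ) / P) ≤ (q : ℝ) * m + m := by
    have : ((q : ℝ) * P + P) * ((m : ℝ) / P) = (q : ℝ) * m + m := by field_simp
    nlinarith [div_nonneg hm0 hP'.le]
  have key2 : (q : ℝ) * m ≤ (N : ℝ) * ((m : ℝ) / P) := by
    have : ((q : ℝ) * P) * ((m : ℝ) / P) = (q : ℝ) * m := by field_simp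
    nlinarith [div_nonneg hm0 hP'.le]
  rw [abs_le]
  constructor <;> nlinarith

private lemma helper_mem_R {bb rr n : ℕ} (hb : 0 < bb) (hr : rr < bb) (hn : bb ≤ n) :
    (∃ j ≥ 1, n = rr + j * bb) ↔ n % bb = rr := by
  constructor
  · rintro ⟨j, hj1, rfl⟩
    rw [Nat.add_mul_mod_self_right]
    exact Nat.mod_eq_of_lt hr
  · intro h
    refine ⟨n / bb, ?_, ?_⟩
    · exact (Nat.one_le_div_iff hb).2 hn
    · conv_lhs => rw [← Nat.div_add_mod n bb]
      rw [h]; ring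

private lemma helper_R_count (bb cc N : ℕ) (c' : ℕ → ℕ) (hb : 0 < bb)
    [DecidablePred fun n => ∃ k ≤ cc, ∃ j ≥ 1, n = c' k + j * bb] :
    (((Finset.Icc 1 N).filter
      (fun n => ∃ k ≤ cc, ∃ j ≥ 1, n = c' k + j * bb)).card : ℝ)
      ≤ ((cc : ℝ) + 1) * (N : ℝ) / bb := by
  have hsub : (Finset.Icc 1 N).filter (fun n => ∃ k ≤ cc, ∃ j ≥ 1, n = c' k + j * bb)
      ⊆ (range (cc + 1)).biUnion
        (fun k => (Finset.Icc 1 (N / bb)).image (fun j => c' k + j * bb)) := by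
    intro n hn
    simp only [mem_filter, Finset.mem_Icc] at hn
    obtain ⟨⟨h1, h2⟩, k, hk, j, hj, rfl⟩ := hn
    simp only [Finset.mem_biUnion, Finset.mem_range, Finset.mem_image, Finset.mem_Icc]
    refine ⟨k, by omega, j, ⟨hj, ?_⟩, rfl⟩
    rw [Nat.le_div_iff_mul_le hb]; omega
  have hcard : ((Finset.Icc 1 N).filter
      (fun n => ∃ k ≤ cc, ∃ j ≥ 1, n = c' k + j * bb)).card ≤ (cc + 1) * (N / bb) := by
    apply le_trans (Finset.card_le_card hsub)
    apply le_trans (Finset.card_biUnion_le)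
    apply le_trans (Finset.sum_le_sum (fun k _ => Finset.card_image_le))
    simp [Nat.card_Icc]
  calc (((Finset.Icc 1 N).filter
      (fun n => ∃ k ≤ cc, ∃ j ≥ 1, n = c' k + j * bb)).card : ℝ)
      ≤ (((cc + 1) * (N / bb) : ℕ) : ℝ) := by exact_mod_cast hcard
    _ ≤ ((cc : ℝ) + 1) * ((N / bb : ℕ) : ℝ) := by push_cast; ring_nf; rfl
    _ ≤ ((cc : ℝ) + 1) * ((N : ℝ) / bb) := by
        have := Nat.cast_div_le (α := ℝ) (m := N) (n := bb)
        have hc : (0:ℝ) ≤ (cc:ℝ)+1 := by positivity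
        exact mul_le_mul_of_nonneg_left this hc
    _ = ((cc : ℝ) + 1) * (N : ℝ) / bb := by ring

/-- **A Davenport–Erdős-type theorem for Erdős sieves over `ℕ`** (Theorem 3.2). Let
`(b i)` be positive integers, and for each `i` remove the congruence classes
`r i k + b i · {1, 2, 3, …}` for `k ≤ c i`, where the `r i k ∈ [0, b i)` are pairwise
distinct. If `∑ (c i + 1)/b i < ∞` then the natural density of the unsieved set
`{n ≥ 1 : n avoids every R_i}` exists and is the limit of the densities of the
finite-level unsieved sets `{n ≥ 1 : n avoids R_i for i < L}`
(each of which exists, densities being taken as `lim |A ∩ [0,N]|/(N+1)`). -/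
theorem erdos_density_theorem
    (b : ℕ → ℕ) (hb : ∀ i, 0 < b i) (c : ℕ → ℕ) (r : ℕ → ℕ → ℕ)
    (hr : ∀ i, ∀ k ≤ c i, r i k < b i)
    (hrinj : ∀ i, ∀ k ≤ c i, ∀ l ≤ c i, k ≠ l → r i k ≠ r i l)
    (hsum : Summable fun i => ((c i : ℝ) + 1) / (b i : ℝ)) :
    ∃ dL : ℕ → ℝ, ∃ d : ℝ,
      (∀ L, Tendsto (fun N : ℕ =>
          (Nat.card ↥({n : ℕ | ∀ i < L, ¬ ∃ k ≤ c i, ∃ j ≥ 1, n = r i k + j * b i}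
            ∩ Set.Icc 1 N) : ℝ) / ((N : ℝ) + 1)) atTop (𝓝 (dL L)))
      ∧ Tendsto dL atTop (𝓝 d)
      ∧ Tendsto (fun N : ℕ =>
          (Nat.card ↥({n : ℕ | ∀ i, ¬ ∃ k ≤ c i, ∃ j ≥ 1, n = r i k + j * b i}
            ∩ Set.Icc 1 N) : ℝ) / ((N : ℝ) + 1)) atTop (𝓝 d) := by
  -- abbreviations
  set f : ℕ → ℝ := fun i => ((c i : ℝ) + 1) / (b i : ℝ) with hf
  set pred : ℕ → ℕ → Prop :=
    fun L n => ∀ i < L, ¬ ∃ k ≤ c i, ∃ j ≥ 1, n = r i k + j * b i with hpred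
  set predAll : ℕ → Prop :=
    fun n => ∀ i, ¬ ∃ k ≤ c i, ∃ j ≥ 1, n = r i k + j * b i with hpredAll
  set cnt : ℕ → ℕ → ℕ := fun L N => ((Finset.Icc 1 N).filter (pred L)).card with hcnt
  set cntAll : ℕ → ℕ := fun N => ((Finset.Icc 1 N).filter predAll).card with hcntAll
  -- Nat.card rewriting
  have hcard : ∀ (p : ℕ → Prop) (N : ℕ),
      (Nat.card ↥({n : ℕ | p n} ∩ Set.Icc 1 N)) = ((Finset.Icc 1 N).filter p).card := by
    intro p N
    have hset : {n : ℕ | p n} ∩ Set.Icc 1 N = ↑((Finset.Icc 1 N).filter p) := by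
      ext n
      simp only [Set.mem_inter_iff, Set.mem_setOf_eq, Set.mem_Icc, Finset.coe_filter,
        Finset.mem_Icc, Set.mem_setOf_eq]
      tauto
    rw [hset, Nat.card_coe_set_eq, Set.ncard_coe_finset]
  -- existence of finite-level densities
  have key1 : ∀ L, ∃ α : ℝ, 0 ≤ α ∧
      Tendsto (fun N : ℕ => ((cnt L N : ℝ)) / ((N : ℝ) + 1)) atTop (𝓝 α) := by
    intro L
    set P := ∏ i ∈ Finset.range L, b i with hPdef
    have hP : 0 < P := Finset.prod_pos (fun i _ => hb i)
    have hdvd : ∀ i < L, b i ∣ P :=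
      fun i hi => Finset.dvd_prod_of_mem b (Finset.mem_range.2 hi)
    set Bp : ℕ → Prop := fun n => ∀ i < L, ∀ k ≤ c i, n % b i ≠ r i k with hBp
    have hmod : ∀ n, ∀ i < L, (n + P) % b i = n % b i := by
      intro n i hi
      obtain ⟨t, ht⟩ := hdvd i hi
      rw [ht, Nat.add_mul_mod_self_left]
    have hper : ∀ n, Bp (n + P) ↔ Bp n := by
      intro n
      simp only [hBp]
      exact forall₂_congr fun i hi => forall₂_congr fun k _ => by rw [hmod n i hi]
    have hagree : ∀ n, P ≤ n → (pred L n ↔ Bp n) := by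
      intro n hn
      simp only [hpred, hBp]
      apply forall₂_congr
      intro i hi
      have hbn : b i ≤ n := le_trans (Nat.le_of_dvd hP (hdvd i hi)) hn
      constructor
      · intro h k hk heq
        exact h ⟨k, hk, (helper_mem_R (hb i) (hr i k hk) hbn).2 heq⟩
      · rintro h ⟨k, hk, hex⟩
        exact h k hk ((helper_mem_R (hb i) (hr i k hk) hbn).1 hex)
    set m := ((range P).filter Bp).card with hm
    have hmle : m ≤ P := le_trans (Finset.card_filter_le _ _) (by simp)
    refine ⟨(m : ℝ) / P, by positivity, ?_⟩
    apply helper_tendsto (K := 2 * P)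
    intro N
    set s2 := (range (N + 1)).filter Bp with hs2
    have hc1 : cnt L N ≤ s2.card + P := by
      have hsub : (Finset.Icc 1 N).filter (pred L) ⊆ s2 ∪ range P := by
        intro n hn
        rw [Finset.mem_filter, Finset.mem_Icc] at hn
        rcases lt_or_ge n P with h | h
        · exact Finset.mem_union_right _ (Finset.mem_range.2 h)
        · refine Finset.mem_union_left _ ?_
          rw [hs2, Finset.mem_filter, Finset.mem_range]
          exact ⟨by omega, (hagree n h).1 hn.2⟩
      calc cnt L N ≤ (s2 ∪ range P).card := Finset.card_le_card hsub
        _ ≤ s2.card + (range P).card := Finset.card_union_le _ _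
        _ = s2.card + P := by rw [Finset.card_range]
    have hc2 : s2.card ≤ cnt L N + P := by
      have hsub : s2 ⊆ (Finset.Icc 1 N).filter (pred L) ∪ range P := by
        intro n hn
        rw [hs2, Finset.mem_filter, Finset.mem_range] at hn
        rcases lt_or_ge n P with h | h
        · exact Finset.mem_union_right _ (Finset.mem_range.2 h)
        · refine Finset.mem_union_left _ ?_
          rw [Finset.mem_filter, Finset.mem_Icc]
          exact ⟨⟨by omega, by omega⟩, (hagree n h).2 hn.2⟩
      calc s2.card ≤ _ := Finset.card_le_card hsub
        _ ≤ cnt L N + (range P).card := Finset.card_union_le _ _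
        _ = cnt L N + P := by rw [Finset.card_range]
    have hcb := helper_count_bound Bp P hP hper (N + 1)
    rw [← hs2, ← hm] at hcb
    rw [abs_le] at hcb
    have hcast : (((N + 1 : ℕ) : ℝ)) = (N : ℝ) + 1 := by push_cast; ring
    rw [hcast] at hcb
    have hc1' : (cnt L N : ℝ) ≤ (s2.card : ℝ) + P := by exact_mod_cast hc1
    have hc2' : (s2.card : ℝ) ≤ (cnt L N : ℝ) + P := by exact_mod_cast hc2
    have hP' : (0 : ℝ) ≤ P := by positivity
    rw [abs_le]
    constructor <;> linarith [hcb.1, hcb.2]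
  choose dL hdL0 hdL using key1
  -- antitone
  have hmono : ∀ L L', L ≤ L' → ∀ N, cnt L' N ≤ cnt L N := by
    intro L L' hLL N
    apply Finset.card_le_card
    intro n hn
    rw [Finset.mem_filter] at hn ⊢
    exact ⟨hn.1, fun i hi => hn.2 i (lt_of_lt_of_le hi hLL)⟩
  have hant : Antitone dL := by
    intro L L' hLL
    refine le_of_tendsto_of_tendsto' (hdL L') (hdL L) (fun N => ?_)
    have := hmono L L' hLL N
    have h0 : (0:ℝ) < (N:ℝ) + 1 := by positivity
    apply div_le_div_of_nonneg_right ?_ h0.le |>.trans_eq rfl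
    exact_mod_cast this
  have hbdd : BddBelow (Set.range dL) := ⟨0, fun x ⟨L, hL⟩ => hL ▸ hdL0 L⟩
  set d := ⨅ L, dL L with hd'
  have hdlim : Tendsto dL atTop (𝓝 d) := tendsto_atTop_ciInf hant hbdd
  have hdge : ∀ L, d ≤ dL L := fun L => ciInf_le hbdd L
  -- tail sums
  set εt : ℕ → ℝ := fun L => ∑' k, f (k + L) with hεt'
  have hε0 : ∀ L, 0 ≤ εt L := fun L => tsum_nonneg (fun k => by
    have := hb (k + L); positivity)
  have hεlim : Tendsto εt atTop (𝓝 0) := tendsto_sum_nat_add f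
  -- key inequality
  have key2 : ∀ L N, (cnt L N : ℝ) ≤ (cntAll N : ℝ) + (N : ℝ) * εt L := by
    intro L N
    set sL := (Finset.Icc 1 N).filter (pred L) with hsL
    set sA := (Finset.Icc 1 N).filter predAll with hsA
    have hsub : sA ⊆ sL := by
      intro n hn
      rw [hsA, Finset.mem_filter] at hn
      rw [hsL, Finset.mem_filter]
      exact ⟨hn.1, fun i _ => hn.2 i⟩
    have hcardeq : (sL \ sA).card + sA.card = sL.card :=
      Finset.card_sdiff_add_card_eq_card hsub
    have hDex : ∀ n ∈ sL \ sA,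
        ∃ i, L ≤ i ∧ ∃ k ≤ c i, ∃ j ≥ 1, n = r i k + j * b i := by
      intro n hn
      rw [Finset.mem_sdiff, hsL, hsA, Finset.mem_filter, Finset.mem_filter] at hn
      obtain ⟨⟨hmem, hpL⟩, hnA⟩ := hn
      have hnA' : ¬ predAll n := fun h => hnA ⟨hmem, h⟩
      rw [hpredAll] at hnA'
      obtain ⟨i, hi⟩ := not_forall.1 hnA'
      have hi' := not_not.1 hi
      refine ⟨i, ?_, hi'⟩
      by_contra hLi
      push_neg at hLi
      exact hpL i hLi hi'
    choose idx hidx1 hidx2 using hDex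
    set T := (sL \ sA).attach.image (fun x => idx x.1 x.2) with hT
    have hTL : ∀ i ∈ T, L ≤ i := by
      intro i hi
      rw [hT] at hi
      obtain ⟨x, _, rfl⟩ := Finset.mem_image.1 hi
      exact hidx1 x.1 x.2
    have hcover : sL \ sA ⊆ T.biUnion (fun i => (Finset.Icc 1 N).filter
        (fun n => ∃ k ≤ c i, ∃ j ≥ 1, n = r i k + j * b i)) := by
      intro n hn
      rw [Finset.mem_biUnion]
      refine ⟨idx n hn, ?_, ?_⟩
      · rw [hT]
        exact Finset.mem_image.2 ⟨⟨n, hn⟩, Finset.mem_attach _ _, rfl⟩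
      · rw [Finset.mem_filter]
        have h1 := Finset.mem_sdiff.1 hn
        have h2 := h1.1
        rw [hsL, Finset.mem_filter] at h2
        exact ⟨h2.1, hidx2 n hn⟩
    have hD1 : ((sL \ sA).card : ℝ) ≤
        ∑ i ∈ T, (((Finset.Icc 1 N).filter
          (fun n => ∃ k ≤ c i, ∃ j ≥ 1, n = r i k + j * b i)).card : ℝ) := by
      have h1 : (sL \ sA).card ≤ ∑ i ∈ T, ((Finset.Icc 1 N).filter
          (fun n => ∃ k ≤ c i, ∃ j ≥ 1, n = r i k + j * b i)).card :=
        le_trans (Finset.card_le_card hcover) Finset.card_biUnion_le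
      exact_mod_cast h1
    have hD2 : ∀ i ∈ T, (((Finset.Icc 1 N).filter
        (fun n => ∃ k ≤ c i, ∃ j ≥ 1, n = r i k + j * b i)).card : ℝ)
        ≤ (N : ℝ) * f i := by
      intro i _
      refine le_trans (helper_R_count (b i) (c i) N (r i) (hb i)) ?_
      rw [hf]
      have hbi : (0:ℝ) < b i := by exact_mod_cast hb i
      field_simp
      rfl
    have hD3 : ∑ i ∈ T, f i ≤ εt L := by
      have hsum' : Summable (fun k => f (k + L)) := (summable_nat_add_iff L).2 hsum
      have hinj : ∀ x ∈ T, ∀ y ∈ T, x - L = y - L → x = y := by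
        intro x hx y hy hxy
        have := hTL x hx; have := hTL y hy; omega
      have heqs : ∑ j ∈ T.image (fun i => i - L), f (j + L) = ∑ i ∈ T, f (i - L + L) :=
        Finset.sum_image hinj
      have heqs2 : ∑ i ∈ T, f (i - L + L) = ∑ i ∈ T, f i := by
        apply Finset.sum_congr rfl
        intro i hi
        rw [Nat.sub_add_cancel (hTL i hi)]
      rw [← heqs2, ← heqs]
      refine Summable.sum_le_tsum _ (fun k _ => ?_) hsum'
      rw [hf]
      have := hb (k + L)
      positivity
    have hDfinal : ((sL \ sA).card : ℝ) ≤ (N : ℝ) * εt L := by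
      calc ((sL \ sA).card : ℝ) ≤ ∑ i ∈ T, (N : ℝ) * f i :=
            le_trans hD1 (Finset.sum_le_sum hD2)
        _ = (N : ℝ) * ∑ i ∈ T, f i := by rw [Finset.mul_sum]
        _ ≤ (N : ℝ) * εt L := by
            have hN0 : (0:ℝ) ≤ N := by positivity
            exact mul_le_mul_of_nonneg_left hD3 hN0
    have hfin : (cnt L N : ℝ) = ((sL \ sA).card : ℝ) + (cntAll N : ℝ) := by
      have : cnt L N = (sL \ sA).card + cntAll N := hcardeq.symm
      exact_mod_cast this
    rw [hfin]
    linarith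
  have hAllle : ∀ L N, cntAll N ≤ cnt L N := by
    intro L N
    apply Finset.card_le_card
    intro n hn
    rw [Finset.mem_filter] at hn ⊢
    exact ⟨hn.1, fun i _ => hn.2 i⟩
  -- conclude
  refine ⟨dL, d, ?_, hdlim, ?_⟩
  · intro L
    have : (fun N : ℕ =>
        (Nat.card ↥({n : ℕ | pred L n} ∩ Set.Icc 1 N) : ℝ) / ((N : ℝ) + 1))
        = fun N : ℕ => ((cnt L N : ℝ)) / ((N : ℝ) + 1) := by
      funext N; rw [hcard (pred L) N, hcnt]; congr!
    rw [this]; exact hdL L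
  · have heq : (fun N : ℕ =>
        (Nat.card ↥({n : ℕ | predAll n} ∩ Set.Icc 1 N) : ℝ) / ((N : ℝ) + 1))
        = fun N : ℕ => ((cntAll N : ℝ)) / ((N : ℝ) + 1) := by
      funext N; rw [hcard predAll N]
    rw [heq]
    rw [Metric.tendsto_atTop]
    intro ε hε
    have hev1 : ∀ᶠ L in atTop, dL L < d + ε / 3 :=
      hdlim.eventually_lt_const (by linarith)
    have hev2 : ∀ᶠ L in atTop, εt L < ε / 3 :=
      hεlim.eventually_lt_const (by linarith)
    obtain ⟨L, hL1, hL2⟩ := (hev1.and hev2).exists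
    have := (Metric.tendsto_atTop.1 (hdL L)) (ε / 3) (by linarith)
    obtain ⟨N₀, hN₀⟩ := this
    refine ⟨N₀, fun N hN => ?_⟩
    have hyd := hN₀ N hN
    rw [Real.dist_eq] at hyd ⊢
    set x := (cntAll N : ℝ) / ((N : ℝ) + 1)
    set y := (cnt L N : ℝ) / ((N : ℝ) + 1)
    have h0 : (0:ℝ) < (N:ℝ) + 1 := by positivity
    have hxy : x ≤ y := by
      apply div_le_div_of_nonneg_right ?_ h0.le |>.trans_eq rfl
      exact_mod_cast hAllle L N
    have hyx : y ≤ x + εt L := by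
      have h1 := key2 L N
      have hx' : (cntAll N : ℝ) = x * ((N : ℝ) + 1) :=
        (div_mul_cancel₀ _ h0.ne').symm
      have h4 : (cnt L N : ℝ) ≤ (x + εt L) * ((N : ℝ) + 1) := by
        nlinarith [hε0 L]
      exact (div_le_iff₀ h0).2 h4
    have habs := abs_sub_lt_iff.1 hyd
    rw [abs_sub_lt_iff]
    constructor
    · linarith [hdge L]
    · linarith [hdge L]
end

section
/- There exists a sequence (a_i)_{i≥1} of integers such that, letting p_i denote the i-th prime and R_i := a_i + p_i^4 ℤ, the set F_R := ℕ ∖ ⋃_{i≥1} R_i does not have a logarithmic density; that is, liminf_{N→∞} (1/log N) ∑_{m ∈ F_R, 1 ≤ m ≤ N} 1/m is strictly smaller than limsup_{N→∞} (1/log N) ∑_{m ∈ F_R, 1 ≤ m ≤ N} 1/m. (In particular there is a sieve over ℚ, supported on the pairwise coprime ideals p_i^4ℤ with each R_i a single congruence class, whose set of R-free numbers has no logarithmic density, hence no natural density.) -/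
/-!
Take `a i = i` when `i` lies in one of the sparse blocks `(2 ^ e, 2 ^ (2 e)]`, `e = 100 ^ (k + 1)`,
and `a i = 0` otherwise. As `i < p_i ^ 4`, every `i` of a block lies in its own removed class, so
the free set misses the whole block and at `N = 2 ^ (2 e)` the ratio is about `1 / 2`.
At the end `N = 2 ^ (100 e)` of the following gap, the class of index `i` costs at most
`1 / a i + H(N) / p_i ^ 4` of the harmonic sum `H(N)`; the first terms add up to at most
`H(2 ^ (2 e))` and the second to at most `(ζ(4) - 1) H(N) < H(N) / 10`, so the ratio is at
least `4 / 5`.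
-/

open Filter Topology Finset

theorem Finset.sum_biUnion_le_sum_sum {ι α M : Type*} [DecidableEq α] [AddCommMonoid M]
    [PartialOrder M] [IsOrderedAddMonoid M] {s : Finset ι} {t : ι → Finset α} {f : α → M}
    (hf : ∀ x, 0 ≤ f x) : ∑ x ∈ s.biUnion t, f x ≤ ∑ i ∈ s, ∑ x ∈ t i, f x := by
  classical
  induction s using Finset.induction_on with
  | empty => simp
  | insert i s hi ih =>
    rw [biUnion_insert, sum_insert hi]
    calc ∑ x ∈ t i ∪ s.biUnion t, f x
        ≤ ∑ x ∈ t i ∪ s.biUnion t, f x + ∑ x ∈ t i ∩ s.biUnion t, f x :=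
          le_add_of_nonneg_right (sum_nonneg fun x _ => hf x)
      _ = ∑ x ∈ t i, f x + ∑ x ∈ s.biUnion t, f x := sum_union_inter
      _ ≤ ∑ x ∈ t i, f x + ∑ j ∈ s, ∑ x ∈ t j, f x := add_le_add_right ih _

theorem sum_Icc_one_div_eq_harmonic (N : ℕ) :
    ∑ m ∈ Icc 1 N, (1 : ℝ) / m = harmonic N := by
  simp [harmonic_eq_sum_Icc, one_div]

theorem log_le_harmonic (N : ℕ) : Real.log N ≤ harmonic N := by
  simpa using log_le_harmonic_floor (N : ℝ) N.cast_nonneg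

theorem sum_one_div_le_harmonic {s : Finset ℕ} {A : ℕ} (hs : ∀ m ∈ s, m ≤ A) :
    ∑ m ∈ s, (1 : ℝ) / m ≤ harmonic A := by
  rw [← sum_Icc_one_div_eq_harmonic, ← sum_filter_of_ne (p := (1 ≤ ·)) fun m _ hm => ?_]
  · refine sum_le_sum_of_subset_of_nonneg (fun m hm => ?_) fun _ _ _ => by positivity
    rw [mem_filter] at hm
    exact mem_Icc.2 ⟨hm.2, hs m hm.1⟩
  · exact Nat.one_le_iff_ne_zero.2 fun h => hm (by simp [h])

theorem sum_indicator_one_div_le_harmonic {S : Set ℕ} {N A : ℕ}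
    (hS : ∀ m ∈ S, m ≤ N → m ≤ A) :
    ∑ m ∈ Icc 1 N, S.indicator (fun n => 1 / (n : ℝ)) m ≤ harmonic A := by
  classical
  rw [sum_indicator_eq_sum_filter]
  refine sum_one_div_le_harmonic fun m hm => ?_
  rw [mem_filter, mem_Icc] at hm
  exact hS m hm.2 hm.1.2

/-- Writing `m = q * t + r`, the term `t = 0` contributes `1 / r` (which is `0` when `r = 0`)
and every other term is at most `1 / (q * t)`. -/
theorem sum_one_div_filter_mod_eq_le {q : ℕ} (hq : 0 < q) (r N : ℕ) :
    ∑ m ∈ Icc 1 N with m % q = r, (1 : ℝ) / m ≤ 1 / r + harmonic N / q := by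
  have hsub : {m ∈ Icc 1 N | m % q = r} ⊆ (range (N + 1)).image (fun t => q * t + r) := by
    intro m hm
    rw [mem_filter, mem_Icc] at hm
    refine mem_image.2 ⟨m / q, mem_range.2 ?_, by rw [← hm.2, Nat.div_add_mod]⟩
    exact Nat.lt_succ_of_le ((Nat.div_le_self m q).trans hm.1.2)
  have hinj : Set.InjOn (fun t => q * t + r) (range (N + 1)) := fun a _ b _ h => by
    simpa [hq.ne'] using h
  calc ∑ m ∈ Icc 1 N with m % q = r, (1 : ℝ) / m
      ≤ ∑ m ∈ (range (N + 1)).image (fun t => q * t + r), (1 : ℝ) / m :=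
        sum_le_sum_of_subset_of_nonneg hsub fun _ _ _ => by positivity
    _ = ∑ t ∈ range N, (1 : ℝ) / ((q * (t + 1) + r : ℕ) : ℝ) + 1 / r := by
        rw [sum_image hinj, sum_range_succ']
        simp
    _ ≤ ∑ t ∈ range N, (1 : ℝ) / (q * (t + 1)) + 1 / r := by
        gcongr with t
        push_cast; linarith [(r.cast_nonneg : (0 : ℝ) ≤ r)]
    _ = 1 / r + harmonic N / q := by
        rw [add_comm, harmonic]
        push_cast
        rw [sum_div]
        congr 1
        refine sum_congr rfl fun t _ => ?_
        field_simp

def sieveFree (q r : ℕ → ℕ) : Set ℕ := {n | ∀ i, n % q i ≠ r i}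

theorem harmonic_sub_le_sum_indicator_sieveFree {q : ℕ → ℕ} (hq : ∀ i, 0 < q i) (r : ℕ → ℕ)
    {N : ℕ} {I : Finset ℕ} (hI : ∀ m ∈ Icc 1 N, ∀ i, m % q i = r i → i ∈ I) :
    harmonic N - ∑ i ∈ I, (1 / (r i : ℝ) + harmonic N / q i) ≤
      ∑ m ∈ Icc 1 N, (sieveFree q r).indicator (fun n => 1 / (n : ℝ)) m := by
  classical
  set F := sieveFree q r
  have hsplit : ∑ m ∈ Icc 1 N, F.indicator (fun n => 1 / (n : ℝ)) m
      + ∑ m ∈ Icc 1 N, Fᶜ.indicator (fun n => 1 / (n : ℝ)) m = harmonic N := by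
    rw [← sum_add_distrib, ← sum_Icc_one_div_eq_harmonic]
    exact sum_congr rfl fun m _ => congrFun (F.indicator_self_add_compl _) m
  have hsieved : {m ∈ Icc 1 N | m ∈ Fᶜ} ⊆ I.biUnion fun i => {m ∈ Icc 1 N | m % q i = r i} := by
    intro m hm
    rw [mem_filter] at hm
    obtain ⟨i, hi⟩ : ∃ i, m % q i = r i := by simpa [F, sieveFree] using hm.2
    exact mem_biUnion.2 ⟨i, hI m hm.1 i hi, mem_filter.2 ⟨hm.1, hi⟩⟩
  have hremoved : ∑ m ∈ Icc 1 N, Fᶜ.indicator (fun n => 1 / (n : ℝ)) m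
      ≤ ∑ i ∈ I, (1 / (r i : ℝ) + harmonic N / q i) := by
    rw [sum_indicator_eq_sum_filter]
    calc ∑ m ∈ Icc 1 N with m ∈ Fᶜ, (1 : ℝ) / m
        ≤ ∑ m ∈ I.biUnion fun i => {m ∈ Icc 1 N | m % q i = r i}, (1 : ℝ) / m :=
          sum_le_sum_of_subset_of_nonneg hsieved fun _ _ _ => by positivity
      _ ≤ ∑ i ∈ I, ∑ m ∈ Icc 1 N with m % q i = r i, (1 : ℝ) / m :=
          sum_biUnion_le_sum_sum fun _ => by positivity
      _ ≤ _ := sum_le_sum fun i _ => sum_one_div_filter_mod_eq_le (hq i) _ _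
  linarith

theorem sum_one_div_pow_four_le {t : Finset ℕ} (ht : 1 ∉ t) :
    ∑ n ∈ t, 1 / (n : ℝ) ^ 4 ≤ Real.pi ^ 4 / 90 - 1 := by
  have := sum_le_hasSum (insert 1 t) (fun _ _ => by positivity) hasSum_zeta_four
  rw [sum_insert ht, Nat.cast_one, one_pow, div_one] at this
  linarith

theorem sum_one_div_nth_prime_pow_four_le (s : Finset ℕ) :
    ∑ i ∈ s, 1 / ((Nat.nth Nat.Prime i ^ 4 : ℕ) : ℝ) ≤ 1 / 10 := by
  have hinj := Nat.nth_injective Nat.infinite_setOfPred_prime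
  have h1 : 1 ∉ s.image (Nat.nth Nat.Prime) := by
    simp only [mem_image, not_exists, not_and]
    exact fun i _ h => Nat.not_prime_one (h ▸ Nat.prime_nth_prime i)
  have hpi : Real.pi ^ 4 < 99 := by
    have := pow_lt_pow_left₀ Real.pi_lt_d2 Real.pi_pos.le (n := 4) (by norm_num)
    norm_num at this
    linarith
  calc ∑ i ∈ s, 1 / ((Nat.nth Nat.Prime i ^ 4 : ℕ) : ℝ)
      = ∑ n ∈ s.image (Nat.nth Nat.Prime), 1 / (n : ℝ) ^ 4 := by
        rw [sum_image fun a _ b _ h => hinj h]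
        push_cast; rfl
    _ ≤ 1 / 10 := by linarith [sum_one_div_pow_four_le h1]

theorem Int.natCast_dvd_sub_natCast_iff_mod_eq {q r m : ℕ} (hr : r < q) :
    (q : ℤ) ∣ (m : ℤ) - r ↔ m % q = r := by
  rw [← Nat.modEq_iff_dvd, Nat.ModEq, Nat.mod_eq_of_lt hr, eq_comm]

theorem Real.log_natCast_two_pow (n : ℕ) : Real.log ((2 ^ n : ℕ) : ℝ) = n * Real.log 2 := by
  rw [Nat.cast_pow, Nat.cast_ofNat, Real.log_pow]

noncomputable def logDensityRatio (S : Set ℕ) (N : ℕ) : ℝ :=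
  (∑ m ∈ Icc 1 N, S.indicator (fun n => 1 / (n : ℝ)) m) / Real.log N

theorem logDensityRatio_nonneg (S : Set ℕ) (N : ℕ) : 0 ≤ logDensityRatio S N :=
  div_nonneg (sum_nonneg fun m _ => Set.indicator_nonneg (fun n _ => by positivity) m)
    (Real.log_natCast_nonneg N)

theorem logDensityRatio_le_three (S : Set ℕ) {N : ℕ} (hN : 2 ≤ N) :
    logDensityRatio S N ≤ 3 := by
  have hlog : 1 / 2 < Real.log N := by
    have : Real.log 2 ≤ Real.log N := Real.log_le_log two_pos (by exact_mod_cast hN)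
    linarith [Real.log_two_gt_d9]
  rw [logDensityRatio, div_le_iff₀ (by linarith)]
  linarith [sum_indicator_one_div_le_harmonic (S := S) (N := N) fun _ _ h => h,
    harmonic_le_one_add_log N]

theorem liminf_logDensityRatio_lt_limsup {S : Set ℕ} {a b : ℝ} (hab : a < b)
    (ha : ∃ᶠ N in atTop, logDensityRatio S N ≤ a)
    (hb : ∃ᶠ N in atTop, b ≤ logDensityRatio S N) :
    liminf (logDensityRatio S) atTop < limsup (logDensityRatio S) atTop :=
  calc liminf (logDensityRatio S) atTop ≤ a :=
        liminf_le_of_frequently_le ha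
          (isBoundedUnder_of_eventually_ge (.of_forall (logDensityRatio_nonneg S)))
    _ < b := hab
    _ ≤ limsup (logDensityRatio S) atTop :=
        le_limsup_of_frequently_le hb (isBoundedUnder_of_eventually_le
          ((eventually_ge_atTop 2).mono fun _ => logDensityRatio_le_three S))

namespace SieveWithoutLogDensity

def blockExponent (k : ℕ) : ℕ := 100 ^ (k + 1)

def blocks : Set ℕ := {i | ∃ k, 2 ^ blockExponent k < i ∧ i ≤ 2 ^ (2 * blockExponent k)}

open scoped Classical in
noncomputable def residue (i : ℕ) : ℕ := if i ∈ blocks then i else 0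

noncomputable def modulus (i : ℕ) : ℕ := Nat.nth Nat.Prime i ^ 4

theorem blockExponent_strictMono : StrictMono blockExponent := fun _ _ h =>
  Nat.pow_lt_pow_right (by norm_num) (by omega)

theorem five_le_blockExponent_mul_log_two (k : ℕ) : 5 ≤ (blockExponent k : ℝ) * Real.log 2 := by
  have : (100 : ℝ) ≤ blockExponent k := by
    unfold blockExponent
    exact_mod_cast Nat.le_self_pow k.succ_ne_zero 100
  nlinarith [Real.log_two_gt_d9]

theorem lt_modulus (i : ℕ) : i < modulus i :=
  (Nat.lt_add_of_pos_right two_pos).trans_le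
    ((Nat.add_two_le_nth_prime i).trans (Nat.le_self_pow (by norm_num) _))

theorem residue_le (i : ℕ) : residue i ≤ i := by
  unfold residue
  split_ifs <;> omega

theorem mod_modulus_eq_residue_of_mem_blocks {i : ℕ} (hi : i ∈ blocks) :
    i % modulus i = residue i := by
  rw [Nat.mod_eq_of_lt (lt_modulus i), residue, if_pos hi]

theorem le_of_mod_modulus_eq_residue {m i : ℕ} (hm : 1 ≤ m) (h : m % modulus i = residue i) :
    i ≤ m := by
  unfold residue at h
  split_ifs at h
  · exact h ▸ Nat.mod_le m _
  · exact (lt_modulus i).le.trans (Nat.le_of_dvd hm (Nat.dvd_of_mod_eq_zero h))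

theorem le_of_mem_sieveFree {m k : ℕ} (hm : m ∈ sieveFree modulus residue)
    (hmN : m ≤ 2 ^ (2 * blockExponent k)) : m ≤ 2 ^ blockExponent k := by
  by_contra h
  exact hm m (mod_modulus_eq_residue_of_mem_blocks ⟨k, by omega, hmN⟩)

theorem le_of_mem_blocks {i k : ℕ} (hi : i ∈ blocks) (hiN : i ≤ 2 ^ blockExponent (k + 1)) :
    i ≤ 2 ^ (2 * blockExponent k) := by
  obtain ⟨j, hj, hj'⟩ := hi
  rcases le_or_gt j k with hjk | hkj
  · have := blockExponent_strictMono.monotone hjk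
    exact hj'.trans (Nat.pow_le_pow_right two_pos (by omega))
  · have : 2 ^ blockExponent (k + 1) ≤ 2 ^ blockExponent j :=
      Nat.pow_le_pow_right two_pos (blockExponent_strictMono.monotone hkj)
    omega

open scoped Classical in
theorem sum_one_div_residue_le (k : ℕ) :
    ∑ i ∈ range (2 ^ blockExponent (k + 1) + 1), 1 / (residue i : ℝ)
      ≤ harmonic (2 ^ (2 * blockExponent k)) := by
  -- indices outside the blocks have residue `0` and contribute `1 / 0 = 0`
  calc ∑ i ∈ range (2 ^ blockExponent (k + 1) + 1), 1 / (residue i : ℝ)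
      = ∑ i ∈ range (2 ^ blockExponent (k + 1) + 1) with i ∈ blocks, 1 / (i : ℝ) := by
        rw [sum_filter]
        refine sum_congr rfl fun i _ => ?_
        unfold residue
        split_ifs <;> simp
    _ ≤ _ := sum_one_div_le_harmonic fun i hi => by
        rw [mem_filter, mem_range] at hi
        exact le_of_mem_blocks hi.2 (Nat.lt_succ_iff.1 hi.1)

theorem logDensityRatio_sieveFree_le (k : ℕ) :
    logDensityRatio (sieveFree modulus residue) (2 ^ (2 * blockExponent k)) ≤ 3 / 5 := by
  set x := (blockExponent k : ℝ) * Real.log 2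
  have hx := five_le_blockExponent_mul_log_two k
  have hsum := (sum_indicator_one_div_le_harmonic fun m hm hmN => le_of_mem_sieveFree hm hmN).trans
    (harmonic_le_one_add_log (2 ^ blockExponent k))
  have hlog : Real.log ((2 ^ (2 * blockExponent k) : ℕ) : ℝ) = 2 * x := by
    rw [Real.log_natCast_two_pow]; push_cast; ring
  rw [Real.log_natCast_two_pow] at hsum
  rw [logDensityRatio, hlog, div_le_iff₀ (by linarith)]
  linarith

theorem le_logDensityRatio_sieveFree (k : ℕ) :
    4 / 5 ≤ logDensityRatio (sieveFree modulus residue) (2 ^ blockExponent (k + 1)) := by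
  set N := 2 ^ blockExponent (k + 1)
  set x := (blockExponent k : ℝ) * Real.log 2
  have hx := five_le_blockExponent_mul_log_two k
  have hlogN : Real.log N = 100 * x := by
    rw [Real.log_natCast_two_pow, blockExponent, pow_succ]; push_cast [x, blockExponent]; ring
  have hsieve := harmonic_sub_le_sum_indicator_sieveFree
    (fun i => Nat.zero_lt_of_lt (lt_modulus i)) residue (I := range (N + 1)) fun m hm i hi => by
      rw [mem_Icc] at hm
      exact mem_range.2 (Nat.lt_succ_of_le ((le_of_mod_modulus_eq_residue hm.1 hi).trans hm.2))
  rw [sum_add_distrib] at hsieve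
  have hres := (sum_one_div_residue_le k).trans (harmonic_le_one_add_log _)
  rw [Real.log_natCast_two_pow] at hres
  have hH : 100 * x ≤ harmonic N := hlogN ▸ log_le_harmonic N
  have hmod : ∑ i ∈ range (N + 1), (harmonic N : ℝ) / modulus i ≤ harmonic N / 10 := by
    simp_rw [div_eq_mul_one_div (harmonic N : ℝ)]
    rw [← mul_sum]
    exact mul_le_mul_of_nonneg_left (sum_one_div_nth_prime_pow_four_le _) (by linarith)
  rw [logDensityRatio, hlogN, le_div_iff₀ (by linarith)]
  push_cast at hres
  linarith

theorem setOf_not_dvd_sub_residue_eq_sieveFree :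
    {n : ℕ | ∀ i, ¬ ((Nat.nth Nat.Prime i : ℤ)) ^ 4 ∣ ((n : ℤ) - residue i)}
      = sieveFree modulus residue := by
  ext n
  refine forall_congr' fun i => not_congr ?_
  rw [← Int.natCast_dvd_sub_natCast_iff_mod_eq ((residue_le i).trans_lt (lt_modulus i)),
    modulus, Nat.cast_pow]

end SieveWithoutLogDensity

open SieveWithoutLogDensity in
/-- **A sieve over `ℚ` whose set of free numbers has no logarithmic density**
(Proposition 3.3). There is a choice of congruence classes `a i + p_i^4 ℤ` (one class
modulo the fourth power of each prime, these moduli being pairwise coprime) such that the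
set of positive integers avoiding all of them has no logarithmic density: the `liminf` of
`(1/log N) ∑_{m ≤ N, m free} 1/m` is strictly smaller than the corresponding `limsup`. -/
theorem exists_sieve_without_logarithmic_density :
    ∃ a : ℕ → ℤ,
      liminf (fun N : ℕ =>
          (∑ m ∈ Finset.Icc 1 N,
            Set.indicator {n : ℕ | ∀ i, ¬ ((Nat.nth Nat.Prime i : ℤ)) ^ 4 ∣ ((n : ℤ) - a i)}
              (fun n => 1 / (n : ℝ)) m) / Real.log N) atTop
      < limsup (fun N : ℕ =>
          (∑ m ∈ Finset.Icc 1 N,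
            Set.indicator {n : ℕ | ∀ i, ¬ ((Nat.nth Nat.Prime i : ℤ)) ^ 4 ∣ ((n : ℤ) - a i)}
              (fun n => 1 / (n : ℝ)) m) / Real.log N) atTop := by
  refine ⟨fun i => residue i, ?_⟩
  rw [setOf_not_dvd_sub_residue_eq_sieveFree]
  have hlow : StrictMono fun k => 2 ^ (2 * blockExponent k) := fun _ _ h =>
    Nat.pow_lt_pow_right one_lt_two (by have := blockExponent_strictMono h; omega)
  have hhigh : StrictMono fun k => 2 ^ blockExponent (k + 1) := fun _ _ h =>
    Nat.pow_lt_pow_right one_lt_two (blockExponent_strictMono (by omega))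
  exact liminf_logDensityRatio_lt_limsup (by norm_num : (3 / 5 : ℝ) < 4 / 5)
    (hlow.tendsto_atTop.frequently (.of_forall logDensityRatio_sieveFree_le))
    (hhigh.tendsto_atTop.frequently (.of_forall le_logDensityRatio_sieveFree))
end

section
/- Let K be an étale ℚ-algebra, (I_N) a Følner sequence in O_K, L ≥ 1 an integer, and 𝔟_1, …, 𝔟_L pairwise coprime invertible ideals of O_K. For each 1 ≤ i ≤ L let A_i ⊆ O_K be an arbitrary set and put R_i := A_i + 𝔟_i, and let C_L := {x ∈ O_K : x ∉ R_i for all 1 ≤ i ≤ L}. Then |C_L ∩ I_N|/|I_N| converges as N → ∞, and the density d_I(C_L) equals ∏_{i=1}^{L} (1 − |R_i|/N(𝔟_i)), where |R_i| is the cardinality of the image of R_i in O_K/𝔟_i. -/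
open Filter Topology MeasureTheory Pointwise symmDiff

noncomputable section

namespace ErdosSieve

variable {O : Type} [CommRing O]

/-- A sieve over (the ring of integers of) an étale `ℚ`-algebra: a sequence of pairwise
coprime invertible (i.e. finite-quotient) ideals `b i` together with, for each `i`, a finite
set `gen i` of representatives, so that the sieved-out set is `R_i = gen i + b i`, which is
required to be a proper subset of the ring. -/
structure Sieve (O : Type) [CommRing O] : Type where
  b : ℕ → Ideal O
  gen : ℕ → Finset O
  coprime : ∀ i j, i ≠ j → b i ⊔ b j = ⊤
  finQuot : ∀ i, Finite (O ⧸ b i)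
  ne_univ : ∀ i, (↑(gen i) : Set O) + (↑(b i) : Set O) ≠ Set.univ

/-- The `i`-th sieved-out set `R_i = gen i + b i`. -/
def Sieve.RSet (S : Sieve O) (i : ℕ) : Set O := (↑(S.gen i) : Set O) + (↑(S.b i) : Set O)

/-- The set `F_R` of `R`-free numbers. -/
def Sieve.FR (S : Sieve O) : Set O := (⋃ i, S.RSet i)ᶜ

/-- The norm `N(b i)` of the `i`-th ideal. -/
def Sieve.normb (S : Sieve O) (i : ℕ) : ℕ := Nat.card (O ⧸ S.b i)

/-- The number `|R_i|` of residue classes modulo `b i` met by `R_i`. -/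
def Sieve.cardR (S : Sieve O) (i : ℕ) : ℕ :=
  Nat.card ((Ideal.Quotient.mk (S.b i)) '' (S.RSet i))

/-- A sieve is Erdős if `∑ |R_i| / N(b_i) < ∞`. -/
def Sieve.IsErdos (S : Sieve O) : Prop :=
  Summable fun i => (S.cardR i : ℝ) / (S.normb i : ℝ)

/-- A Følner sequence: finite nonempty subsets of `O` which are asymptotically
translation-invariant. -/
def IsFolner (I : ℕ → Set O) : Prop :=
  (∀ N, (I N).Finite) ∧ (∀ N, (I N).Nonempty) ∧
    ∀ x : O, Tendsto
      (fun N => (Nat.card ↥(((x + ·) '' I N) ∆ (I N)) : ℝ) / (Nat.card ↥(I N) : ℝ))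
      atTop (𝓝 0)

/-- Upper density along a (Følner) sequence. -/
def upperDensity (I : ℕ → Set O) (A : Set O) : ℝ :=
  limsup (fun N => (Nat.card ↥(A ∩ I N) : ℝ) / (Nat.card ↥(I N) : ℝ)) atTop

/-- `A` has density `d` along the sequence `I`. -/
def HasDensity (I : ℕ → Set O) (A : Set O) (d : ℝ) : Prop :=
  Tendsto (fun N => (Nat.card ↥(A ∩ I N) : ℝ) / (Nat.card ↥(I N) : ℝ)) atTop (𝓝 d)

/-- `⋃_{i ≥ L} R i`. -/
def unionGe (R : ℕ → Set O) (L : ℕ) : Set O := ⋃ i, ⋃ (_ : L ≤ i), R i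

/-- `⋃_{i < L} R i`. -/
def unionLt (R : ℕ → Set O) (L : ℕ) : Set O := ⋃ i, ⋃ (_ : i < L), R i

/-- The weak light tails property for a family of sieved-out sets:
`limsup`-density of `⋃_{i ≥ L} R_i ∖ ⋃_{j < L} R_j` tends to `0` as `L → ∞`. -/
def WeakLightTailsFam (I : ℕ → Set O) (R : ℕ → Set O) : Prop :=
  Tendsto (fun L => upperDensity I (unionGe R L \ unionLt R L)) atTop (𝓝 0)

/-- The strong light tails property for a family of sieved-out sets. -/
def StrongLightTailsFam (I : ℕ → Set O) (R : ℕ → Set O) : Prop :=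
  Tendsto (fun L => upperDensity I (unionGe R L)) atTop (𝓝 0)

/-- A sieve has weak light tails for `I` if it is Erdős and the tail differences have
vanishing upper density. -/
def Sieve.HasWeakLightTails (S : Sieve O) (I : ℕ → Set O) : Prop :=
  S.IsErdos ∧ WeakLightTailsFam I S.RSet

/-- A sieve has strong light tails for `I` if it is Erdős and the tails have vanishing
upper density. -/
def Sieve.HasStrongLightTails (S : Sieve O) (I : ℕ → Set O) : Prop :=
  S.IsErdos ∧ StrongLightTailsFam I S.RSet

/-- The infinite product `∏_i (1 - |R_i|/N(b_i))`, realized as the infimum of the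
(nonincreasing) sequence of partial products, i.e. as its limit. -/
def Sieve.prodDensity (S : Sieve O) : ℝ :=
  ⨅ L : ℕ, ∏ i ∈ Finset.range L, (1 - (S.cardR i : ℝ) / (S.normb i : ℝ))

/-- `A` is an `R`-admissible set: `-A + R_i ≠ O` for all `i`. -/
def Sieve.Admissible (S : Sieve O) (A : Set O) : Prop :=
  ∀ i, -A + S.RSet i ≠ Set.univ

/-- The number `|-A + R_i|` of residue classes modulo `b i` met by `-A + R_i`. -/
def Sieve.cardShift (S : Sieve O) (A : Set O) (i : ℕ) : ℕ :=
  Nat.card ((Ideal.Quotient.mk (S.b i)) '' (-A + S.RSet i))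

/-- The infinite product `∏_i (1 - |-A + R_i|/N(b_i))` (as the infimum of the
partial products). -/
def Sieve.prodDensityShift (S : Sieve O) (A : Set O) : ℝ :=
  ⨅ L : ℕ, ∏ i ∈ Finset.range L, (1 - (S.cardShift A i : ℝ) / (S.normb i : ℝ))

/-- A subset `Y` of `O` is syndetic if finitely many translates of it cover `O`. -/
def Syndetic (Y : Set O) : Prop := ∃ C : Finset O, Y + (↑C : Set O) = Set.univ

-- Indicator of a subset of `O`, i.e. a point of the shift space `{0,1}^O`.
open Classical in
def chiSet (A : Set O) : O → Bool := fun x => if x ∈ A then true else false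

/-- The shift action `S_a(A) = A - a` on `{0,1}^O`: `χ_{A - a}(x) = χ_A (x + a)`. -/
def shiftB (a : O) (f : O → Bool) : O → Bool := fun x => f (x + a)

/-- The odometer group `G_R = ∏ i, O ⧸ b i`. -/
abbrev Sieve.GR (S : Sieve O) : Type := ∀ i : ℕ, O ⧸ S.b i

-- The map `φ_R : G_R → {0,1}^O`: `a ∈ φ_R(g)` iff `a + g i` avoids (the image of) `R_i`
-- modulo `b i` for every `i`.
open Classical in
def Sieve.phiB (S : Sieve O) (g : S.GR) : O → Bool := fun a =>
  if (∀ i, (Ideal.Quotient.mk (S.b i) a + g i) ∉ (Ideal.Quotient.mk (S.b i)) '' (S.RSet i))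
  then true else false

/-- The Mirsky measure `ν_R` on `{0,1}^O`: the pushforward under `φ_R` of the Haar
probability measure of the compact group `G_R` (each factor being finite and discrete,
and the Haar measure being normalized so that the whole group has measure `1`). -/
def Sieve.mirsky (S : Sieve O) : Measure (O → Bool) := by
  letI : ∀ i, TopologicalSpace (O ⧸ S.b i) := fun _ => ⊥
  haveI : ∀ i, DiscreteTopology (O ⧸ S.b i) := fun _ => ⟨rfl⟩
  haveI : ∀ i, Finite (O ⧸ S.b i) := S.finQuot
  haveI : ∀ i, IsTopologicalAddGroup (O ⧸ S.b i) := fun i => { }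
  letI : MeasurableSpace S.GR := borel _
  haveI : BorelSpace S.GR := ⟨rfl⟩
  exact Measure.map S.phiB (Measure.addHaarMeasure (G := S.GR) ⊤)

/-- The ring of integers of the étale `ℚ`-algebra `K 0 × ⋯ × K (m-1)`. -/
abbrev OK {m : ℕ} (K : Fin m → Type) [∀ j, Field (K j)] [∀ j, NumberField (K j)] : Type :=
  ∀ j, NumberField.RingOfIntegers (K j)

variable {m : ℕ} (K : Fin m → Type) [∀ j, Field (K j)] [∀ j, NumberField (K j)]

/-- The "ball" `B_N` in `O_K`: elements all of whose archimedean embeddings have absolute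
value at most `N` (the max over embeddings of all the number-field components). -/
def ball (N : ℕ) : Set (OK K) :=
  {x | ∀ j, ∀ φ : K j →+* ℂ,
    ‖φ (algebraMap (NumberField.RingOfIntegers (K j)) (K j) (x j))‖ ≤ N}

/-! By the Chinese remainder theorem, `x ↦ (x mod 𝔟_i)_i` maps `O_K` onto the finite group
`G = ∏ O_K/𝔟_i`, and since each `R_i` is a union of cosets of `𝔟_i`, `C_L` is the preimage
of the product of the complements of the images of the `R_i`. Along a Følner sequence, the
fibres of a surjective homomorphism onto a finite group are translates of one another, so their
proportions become asymptotically equal; as they sum to `1`, each fibre has density `1/|G|`. -/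

lemma ncard_inter_le_ncard_inter_add_ncard_symmDiff {α : Type*} (A : Set α) {B B' : Set α}
    (hB : B.Finite) (hB' : B'.Finite) :
    (A ∩ B).ncard ≤ (A ∩ B').ncard + (B ∆ B').ncard := by
  have hsub : A ∩ B ⊆ (A ∩ B') ∪ (B ∆ B') := by
    rintro x ⟨hxA, hxB⟩
    by_cases hxB' : x ∈ B'
    · exact Or.inl ⟨hxA, hxB'⟩
    · exact Or.inr (Or.inl ⟨hxB, hxB'⟩)
  calc (A ∩ B).ncard ≤ ((A ∩ B') ∪ (B ∆ B')).ncard :=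
        Set.ncard_le_ncard hsub ((hB'.inter_of_right A).union (hB.symmDiff hB'))
    _ ≤ (A ∩ B').ncard + (B ∆ B').ncard := Set.ncard_union_le _ _

lemma abs_ncard_inter_sub_ncard_inter_le {α : Type*} (A : Set α) {B B' : Set α}
    (hB : B.Finite) (hB' : B'.Finite) :
    |((A ∩ B).ncard : ℝ) - (A ∩ B').ncard| ≤ (B ∆ B').ncard := by
  have h₁ : ((A ∩ B).ncard : ℝ) ≤ (A ∩ B').ncard + (B ∆ B').ncard := by
    exact_mod_cast ncard_inter_le_ncard_inter_add_ncard_symmDiff A hB hB'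
  have h₂ : ((A ∩ B').ncard : ℝ) ≤ (A ∩ B).ncard + (B ∆ B').ncard := by
    exact_mod_cast symmDiff_comm B B' ▸ ncard_inter_le_ncard_inter_add_ncard_symmDiff A hB' hB
  exact abs_sub_le_iff.2 ⟨by linarith, by linarith⟩

lemma ncard_preimage_inter_eq_sum {α β : Type*} [DecidableEq β] (f : α → β) (s : Finset β)
    {B : Set α} (hB : B.Finite) :
    (f ⁻¹' ↑s ∩ B).ncard = ∑ z ∈ s, (f ⁻¹' {z} ∩ B).ncard := by
  have hunion : f ⁻¹' ↑s ∩ B = ⋃ z ∈ (s : Set β), f ⁻¹' {z} ∩ B := by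
    ext x
    simp
  rw [hunion, s.finite_toSet.ncard_biUnion (fun z _ => hB.inter_of_right _),
    finsum_mem_coe_finset]
  exact fun z _ z' _ hzz' => (Disjoint.preimage f (Set.disjoint_singleton.2 hzz')).mono
    Set.inter_subset_left Set.inter_subset_left

lemma image_add_left_preimage_singleton {G Q : Type*} [AddCommGroup G] [AddCommGroup Q]
    (π : G →+ Q) (x : G) (y : Q) :
    (x + ·) '' (π ⁻¹' {y}) = π ⁻¹' {π x + y} := by
  ext z
  simp [Set.image_add_left, neg_add_eq_iff_eq_add]

def proportion {α : Type*} (I : ℕ → Set α) (A : Set α) (N : ℕ) : ℝ :=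
  (Nat.card ↥(A ∩ I N) : ℝ) / (Nat.card ↥(I N) : ℝ)

lemma hasDensity_iff_tendsto_proportion {α : Type} {I : ℕ → Set α} {A : Set α} {d : ℝ} :
    HasDensity I A d ↔ Tendsto (proportion I A) atTop (𝓝 d) :=
  Iff.rfl

lemma proportion_preimage_eq_sum {α Q : Type*} {I : ℕ → Set α} (hI : ∀ N, (I N).Finite)
    [DecidableEq Q] (f : α → Q) (s : Finset Q) (N : ℕ) :
    proportion I (f ⁻¹' ↑s) N = ∑ z ∈ s, proportion I (f ⁻¹' {z}) N := by
  simp only [proportion, Nat.card_coe_set_eq, ncard_preimage_inter_eq_sum f s (hI N),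
    Nat.cast_sum, Finset.sum_div]

lemma proportion_univ {α : Type*} {I : ℕ → Set α} {N : ℕ} (hfin : (I N).Finite)
    (hne : (I N).Nonempty) : proportion I Set.univ N = 1 := by
  have : (Nat.card ↥(I N) : ℝ) ≠ 0 :=
    Nat.cast_ne_zero.2 (Nat.card_ne_zero.2 ⟨hne.to_subtype, hfin.to_subtype⟩)
  rw [proportion, Set.univ_inter, div_self this]

namespace IsFolner

variable {I : ℕ → Set O} (hI : IsFolner I)
include hI

lemma tendsto_proportion_image_add_sub (x : O) (A : Set O) :
    Tendsto (fun N => proportion I ((x + ·) '' A) N - proportion I A N) atTop (𝓝 0) := by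
  obtain ⟨hfin, -, hinv⟩ := hI
  refine squeeze_zero_norm (fun N => ?_) (hinv x)
  have htrans : ((x + ·) '' A ∩ (x + ·) '' I N).ncard = (A ∩ I N).ncard := by
    rw [← Set.image_inter (add_right_injective x),
      Set.ncard_image_of_injective _ (add_right_injective x)]
  simp only [proportion, Nat.card_coe_set_eq, ← sub_div, norm_div, Real.norm_eq_abs,
    Nat.abs_cast]
  gcongr
  rw [← htrans, abs_sub_comm]
  exact abs_ncard_inter_sub_ncard_inter_le _ ((hfin N).image _) (hfin N)

variable {Q : Type*} [AddCommGroup Q] [Finite Q] {π : O →+ Q}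

lemma hasDensity_preimage_singleton (hπ : Function.Surjective π) (y : Q) :
    HasDensity I (π ⁻¹' {y}) (Nat.card Q)⁻¹ := by
  classical
  cases nonempty_fintype Q
  set p : Q → ℕ → ℝ := fun z => proportion I (π ⁻¹' {z})
  have hsum (N : ℕ) : ∑ z, p z N = 1 := by
    rw [← proportion_preimage_eq_sum hI.1, Finset.coe_univ, Set.preimage_univ,
      proportion_univ (hI.1 N) (hI.2.1 N)]
  have hdiff (z : Q) : Tendsto (fun N => p y N - p z N) atTop (𝓝 0) := by
    obtain ⟨x, hx⟩ := hπ (y - z)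
    have hfibre : π ⁻¹' {y} = (x + ·) '' (π ⁻¹' {z}) := by
      rw [image_add_left_preimage_singleton, hx, sub_add_cancel]
    simpa only [p, hfibre] using hI.tendsto_proportion_image_add_sub x (π ⁻¹' {z})
  have hQ : (Nat.card Q : ℝ) ≠ 0 := Nat.cast_ne_zero.2 Nat.card_pos.ne'
  have hpy (N : ℕ) :
      p y N = (Nat.card Q : ℝ)⁻¹ * ∑ z, (p y N - p z N) + (Nat.card Q : ℝ)⁻¹ := by
    rw [Finset.sum_sub_distrib, hsum, Finset.sum_const, Finset.card_univ, nsmul_eq_mul,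
      ← Nat.card_eq_fintype_card]
    field_simp
    ring
  have hlim := ((tendsto_finsetSum Finset.univ fun z _ => hdiff z).const_mul
    (Nat.card Q : ℝ)⁻¹).add_const (Nat.card Q : ℝ)⁻¹
  rw [Finset.sum_const_zero, mul_zero, zero_add] at hlim
  exact hlim.congr fun N => (hpy N).symm

lemma hasDensity_preimage (hπ : Function.Surjective π) (S : Set Q) :
    HasDensity I (π ⁻¹' S) (S.ncard / Nat.card Q) := by
  classical
  cases nonempty_fintype Q
  have hS := tendsto_finsetSum S.toFinset fun z _ =>
    hasDensity_iff_tendsto_proportion.1 (hI.hasDensity_preimage_singleton hπ z)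
  rw [Finset.sum_const, nsmul_eq_mul, ← Set.ncard_eq_toFinset_card', ← div_eq_mul_inv] at hS
  refine hS.congr fun N => ?_
  rw [← proportion_preimage_eq_sum hI.1, Set.coe_toFinset, proportion]

end IsFolner

lemma Ideal.mk_mem_image_add_iff {R : Type*} [CommRing R] (b : Ideal R) (A : Set R) {x : R} :
    Ideal.Quotient.mk b x ∈ Ideal.Quotient.mk b '' (A + b) ↔ x ∈ A + b := by
  refine ⟨?_, fun h => ⟨x, h, rfl⟩⟩
  rintro ⟨_, ⟨a, ha, c, hc, rfl⟩, hx⟩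
  exact ⟨a, ha, c - (a + c - x), b.sub_mem hc (Ideal.Quotient.eq.1 hx), by ring⟩

lemma ncard_pi_compl_div_card {ι : Type*} [Fintype ι] {Q : ι → Type*} [∀ i, Finite (Q i)]
    [∀ i, Nonempty (Q i)] (T : ∀ i, Set (Q i)) :
    ((Set.univ.pi fun i => (T i)ᶜ).ncard : ℝ) / Nat.card (∀ i, Q i)
      = ∏ i, (1 - (Nat.card (T i) : ℝ) / Nat.card (Q i)) := by
  rw [← Nat.card_coe_set_eq, Nat.card_congr (Equiv.Set.univPi _), Nat.card_pi, Nat.card_pi,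
    Nat.cast_prod, Nat.cast_prod, ← Finset.prod_div_distrib]
  refine Finset.prod_congr rfl fun i _ => ?_
  have hQ : (Nat.card (Q i) : ℝ) ≠ 0 := Nat.cast_ne_zero.2 Nat.card_pos.ne'
  rw [Nat.card_coe_set_eq, Nat.card_coe_set_eq, Set.ncard_compl,
    Nat.cast_sub (Set.ncard_le_card _), sub_div, div_self hQ]

theorem equidistribution_folner_general
    {m : ℕ} (K : Fin m → Type) [∀ j, Field (K j)]
    [∀ j, NumberField (K j)]
    (I : ℕ → Set (OK K)) (hI : IsFolner I) (L : ℕ)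
    (b : Fin L → Ideal (OK K)) (hfin : ∀ i, Finite ((OK K) ⧸ b i))
    (hcop : ∀ i j, i ≠ j → b i ⊔ b j = ⊤)
    (A : Fin L → Set (OK K)) :
    HasDensity I {x : OK K | ∀ i, x ∉ A i + (↑(b i) : Set (OK K))}
      (∏ i, (1 - (Nat.card ↥((Ideal.Quotient.mk (b i)) '' (A i + (↑(b i) : Set (OK K)))) : ℝ)
          / (Nat.card ((OK K) ⧸ b i) : ℝ))) := by
  set π := (LinearMap.pi fun i => (b i).mkQ).toAddMonoidHom
  have hπ : Function.Surjective π :=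
    Ideal.pi_mkQ_surjective fun i j hij => Ideal.isCoprime_iff_sup_eq.2 (hcop i j hij)
  set T := fun i => Ideal.Quotient.mk (b i) '' (A i + (b i : Set (OK K)))
  have hC : {x : OK K | ∀ i, x ∉ A i + (↑(b i) : Set (OK K))}
      = π ⁻¹' Set.univ.pi fun i => (T i)ᶜ := by
    ext x
    simp only [Set.mem_ofPred_eq, Set.mem_preimage, Set.mem_univ_pi, Set.mem_compl_iff, T]
    exact forall_congr' fun i => not_congr (Ideal.mk_mem_image_add_iff _ _).symm
  rw [hC, ← ncard_pi_compl_div_card]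
  exact hI.hasDensity_preimage hπ _

/-- **Equidistribution along Følner sequences.** For finitely many pairwise coprime
invertible ideals `b 1, …, b L` and arbitrary sets `A_i`, setting `R_i = A_i + b_i`, the set
of points avoiding all `R_i` has density `∏ (1 - |R_i|/N(b_i))` along any Følner sequence. -/
theorem equidistribution_folner
    {m : ℕ} (hm : 0 < m) (K : Fin m → Type) [∀ j, Field (K j)]
    [∀ j, NumberField (K j)]
    (I : ℕ → Set (OK K)) (hI : IsFolner I) (L : ℕ) (hL : 1 ≤ L)
    (b : Fin L → Ideal (OK K)) (hfin : ∀ i, Finite ((OK K) ⧸ b i))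
    (hcop : ∀ i j, i ≠ j → b i ⊔ b j = ⊤)
    (A : Fin L → Set (OK K)) :
    HasDensity I {x : OK K | ∀ i, x ∉ A i + (↑(b i) : Set (OK K))}
      (∏ i, (1 - (Nat.card ↥((Ideal.Quotient.mk (b i)) '' (A i + (↑(b i) : Set (OK K)))) : ℝ)
          / (Nat.card ((OK K) ⧸ b i) : ℝ))) :=
  equidistribution_folner_general K I hI L b hfin hcop A

end ErdosSieve
end
end

section
/- Let R be an Erdős sieve over an étale ℚ-algebra K with weak light tails for a Følner sequence (I_N), and let A ⊆ O_K be a finite R-admissible set (i.e. −A + R_i ≠ O_K for every i). Then the density d_I({x ∈ O_K : x + A ⊆ F_R}) exists and equals ∏_{i≥1} (1 − |−A + R_i|/N(𝔟_i)), which is strictly positive; in particular there are infinitely many x ∈ O_K with x + A ⊆ F_R. -/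
/-!
The sets avoiding `R_0, …, R_{L-1}` are preimages of boxes under the Chinese remainder map
`O_K → ∏_{i<L} O_K/𝔟_i`, and a Følner sequence equidistributes among the fibres of any
surjection onto a finite group (the fibres are translates of one another), so these sets have
density `∏_{i<L} (1 - |R_i|/N(𝔟_i))`. Weak light tails say that they approximate `F_R` up to
sets of vanishing upper density, whence `d(F_R) = ∏_i (1 - |R_i|/N(𝔟_i))`, which is positive when
`∑ |R_i|/N(𝔟_i) < ∞`.

The pattern set `{x | x + A ⊆ F_R}` is the set of free numbers of the shifted sieve
`R_i^A = -A + R_i`. This sieve is again Erdős, as `|R_i^A| ≤ |A| |R_i|`, and has weak light tails,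
as its tails are covered by `|A|` translates of those of `R`. Finally a set of positive density is
infinite, because Følner sets in an infinite group grow without bound.
-/

open Filter Topology MeasureTheory Pointwise symmDiff

noncomputable section

namespace ErdosSieve

variable {O : Type} [CommRing O]

variable {m : ℕ} (K : Fin m → Type) [∀ j, Field (K j)] [∀ j, NumberField (K j)]

section Density

variable {α : Type}

def densAt (I : ℕ → Set α) (B : Set α) (N : ℕ) : ℝ := (B ∩ I N).ncard / (I N).ncard

variable {I : ℕ → Set α} {B C : Set α} {N : ℕ}

lemma densAt_nonneg (I : ℕ → Set α) (B : Set α) (N : ℕ) : 0 ≤ densAt I B N := by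
  unfold densAt; positivity

lemma densAt_of_infinite (h : (I N).Infinite) : densAt I B N = 0 := by
  simp [densAt, h.ncard]

lemma densAt_empty (I : ℕ → Set α) : densAt I ∅ = 0 := by
  ext N; simp [densAt]

lemma densAt_le_one (I : ℕ → Set α) (B : Set α) (N : ℕ) : densAt I B N ≤ 1 := by
  rcases (I N).finite_or_infinite with hfin | hinf
  · exact div_le_one_of_le₀ (mod_cast Set.ncard_le_ncard Set.inter_subset_right hfin)
      (Nat.cast_nonneg _)
  · simp [densAt_of_infinite hinf]

lemma isBoundedUnder_le_densAt (I : ℕ → Set α) (B : Set α) :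
    IsBoundedUnder (· ≤ ·) atTop (densAt I B) :=
  isBoundedUnder_of ⟨1, densAt_le_one I B⟩

lemma isBoundedUnder_ge_densAt (I : ℕ → Set α) (B : Set α) :
    IsBoundedUnder (· ≥ ·) atTop (densAt I B) :=
  isBoundedUnder_of ⟨0, densAt_nonneg I B⟩

lemma isCoboundedUnder_le_densAt (I : ℕ → Set α) (B : Set α) :
    IsCoboundedUnder (· ≤ ·) atTop (densAt I B) :=
  (isBoundedUnder_ge_densAt I B).isCoboundedUnder_le

lemma densAt_mono (h : B ⊆ C) (N : ℕ) : densAt I B N ≤ densAt I C N := by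
  rcases (I N).finite_or_infinite with hfin | hinf
  · exact div_le_div_of_nonneg_right
      (mod_cast Set.ncard_le_ncard (Set.inter_subset_inter_left _ h) (hfin.inter_of_right C))
      (Nat.cast_nonneg _)
  · simp [densAt_of_infinite hinf]

lemma densAt_union_le (B C : Set α) (N : ℕ) :
    densAt I (B ∪ C) N ≤ densAt I B N + densAt I C N := by
  rw [densAt, densAt, densAt, ← add_div, Set.union_inter_distrib_right]
  exact div_le_div_of_nonneg_right (mod_cast Set.ncard_union_le _ _) (Nat.cast_nonneg _)

lemma densAt_sdiff (h : B ⊆ C) (N : ℕ) :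
    densAt I (C \ B) N = densAt I C N - densAt I B N := by
  rcases (I N).finite_or_infinite with hfin | hinf
  · rw [densAt, densAt, densAt, ← sub_div, Set.inter_sdiff_distrib_right,
      Set.ncard_sdiff (Set.inter_subset_inter_left _ h) (hfin.inter_of_right B),
      Nat.cast_sub (Set.ncard_le_ncard (Set.inter_subset_inter_left _ h)
        (hfin.inter_of_right C))]
  · simp [densAt_of_infinite hinf]

lemma densAt_biUnion {ι : Type*} (s : Finset ι) {E : ι → Set α}
    (hE : (s : Set ι).PairwiseDisjoint E) (hfin : (I N).Finite) :
    densAt I (⋃ i ∈ s, E i) N = ∑ i ∈ s, densAt I (E i) N := by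
  rw [densAt, Set.iUnion₂_inter, ← Finset.set_biUnion_coe,
    s.finite_toSet.ncard_biUnion (fun i _ => hfin.inter_of_right _)
      (hE.mono fun i => Set.inter_subset_left),
    finsum_mem_coe_finset, Nat.cast_sum, Finset.sum_div]
  rfl

lemma abs_ncard_inter_sub_le (B : Set α) {J J' : Set α} (hJ : J.Finite) (hJ' : J'.Finite) :
    |((B ∩ J').ncard : ℝ) - (B ∩ J).ncard| ≤ (J' ∆ J).ncard := by
  have key : ∀ {J J' : Set α}, J.Finite → J'.Finite →
      ((B ∩ J').ncard : ℝ) ≤ (B ∩ J).ncard + (J' ∆ J).ncard := by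
    intro J J' hJ hJ'
    have hsub : B ∩ J' ⊆ (B ∩ J) ∪ (J' ∆ J) := fun x ⟨hB, hx⟩ => by
      by_cases h : x ∈ J
      · exact Or.inl ⟨hB, h⟩
      · exact Or.inr (Or.inl ⟨hx, h⟩)
    exact_mod_cast (Set.ncard_le_ncard hsub
      ((hJ.inter_of_right B).union (hJ'.sdiff.union hJ.sdiff))).trans (Set.ncard_union_le _ _)
  have h₁ := key hJ hJ'
  have h₂ := key hJ' hJ
  rw [symmDiff_comm] at h₂
  rw [abs_sub_le_iff]
  constructor <;> linarith

lemma hasDensity_iff_tendsto_densAt (I : ℕ → Set α) (B : Set α) (d : ℝ) :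
    HasDensity I B d ↔ Tendsto (densAt I B) atTop (𝓝 d) := by
  simp only [HasDensity, Nat.card_coe_set_eq]
  rfl

lemma upperDensity_eq_limsup_densAt (I : ℕ → Set α) (B : Set α) :
    upperDensity I B = limsup (densAt I B) atTop := by
  simp only [upperDensity, Nat.card_coe_set_eq]
  rfl

lemma upperDensity_nonneg (I : ℕ → Set α) (B : Set α) : 0 ≤ upperDensity I B := by
  rw [upperDensity_eq_limsup_densAt]
  exact le_limsup_of_frequently_le (.of_forall (densAt_nonneg I B))
    (isBoundedUnder_le_densAt I B)

lemma upperDensity_mono (h : B ⊆ C) : upperDensity I B ≤ upperDensity I C := by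
  simp only [upperDensity_eq_limsup_densAt]
  exact limsup_le_limsup (.of_forall (densAt_mono h)) (isCoboundedUnder_le_densAt I B)
    (isBoundedUnder_le_densAt I C)

lemma upperDensity_union_le (B C : Set α) :
    upperDensity I (B ∪ C) ≤ upperDensity I B + upperDensity I C := by
  simp only [upperDensity_eq_limsup_densAt]
  calc limsup (densAt I (B ∪ C)) atTop ≤ limsup (densAt I B + densAt I C) atTop :=
        limsup_le_limsup (.of_forall (densAt_union_le B C)) (isCoboundedUnder_le_densAt I _)
          (isBoundedUnder_le_add (isBoundedUnder_le_densAt I B) (isBoundedUnder_le_densAt I C))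
    _ ≤ _ := limsup_add_le (isBoundedUnder_ge_densAt I B)
        (isBoundedUnder_le_densAt I B) (isCoboundedUnder_le_densAt I C)
        (isBoundedUnder_le_densAt I C)

lemma upperDensity_biUnion_le {ι : Type*} (s : Finset ι) (E : ι → Set α) :
    upperDensity I (⋃ i ∈ s, E i) ≤ ∑ i ∈ s, upperDensity I (E i) :=
  s.apply_union_le_sum (by rw [upperDensity_eq_limsup_densAt, densAt_empty]; exact limsup_const 0)
    (upperDensity_union_le _ _)

lemma hasDensity_of_tendsto_upperDensity_sdiff {U : ℕ → Set α} {d : ℕ → ℝ} {δ : ℝ}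
    (hBU : ∀ L, B ⊆ U L) (hU : ∀ L, HasDensity I (U L) (d L)) (hd : Tendsto d atTop (𝓝 δ))
    (hdiff : Tendsto (fun L => upperDensity I (U L \ B)) atTop (𝓝 0)) :
    HasDensity I B δ := by
  rw [hasDensity_iff_tendsto_densAt, Metric.tendsto_atTop]
  intro ε hε
  have hε3 : 0 < ε / 3 := by positivity
  obtain ⟨L, hdL, hdiffL⟩ := ((hd.eventually (Metric.ball_mem_nhds δ hε3)).and
    (hdiff.eventually (gt_mem_nhds hε3))).exists
  obtain ⟨N₀, hN₀⟩ :=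
    Metric.tendsto_atTop.1 ((hasDensity_iff_tendsto_densAt _ _ _).1 (hU L)) _ hε3
  obtain ⟨N₁, hN₁⟩ := eventually_atTop.1 <| eventually_lt_of_limsup_lt
    (by rwa [← upperDensity_eq_limsup_densAt]) (isBoundedUnder_le_densAt I (U L \ B))
  refine ⟨max N₀ N₁, fun N hN => ?_⟩
  have hsplit := densAt_sdiff (I := I) (hBU L) N
  have h₁ := hN₀ N (le_of_max_le_left hN)
  have h₂ := hN₁ N (le_of_max_le_right hN)
  have h₃ := densAt_nonneg I (U L \ B) N
  rw [Real.dist_eq, abs_lt] at hdL h₁ ⊢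
  constructor <;> linarith [hdL.1, hdL.2, h₁.1, h₁.2]

end Density

section Folner

variable {I : ℕ → Set O} (hI : IsFolner I)
include hI

lemma IsFolner.ncard_pos (N : ℕ) : 0 < (I N).ncard :=
  (Set.ncard_pos (hI.1 N)).2 (hI.2.1 N)

lemma IsFolner.densAt_univ (N : ℕ) : densAt I Set.univ N = 1 := by
  rw [densAt, Set.univ_inter, div_self (mod_cast (hI.ncard_pos N).ne')]

lemma IsFolner.tendsto_ncard_symmDiff_div (x : O) :
    Tendsto (fun N => ((x +ᵥ I N) ∆ I N).ncard / (I N).ncard : ℕ → ℝ) atTop (𝓝 0) := by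
  have h := hI.2.2 x
  simp only [Nat.card_coe_set_eq] at h
  exact h

lemma IsFolner.tendsto_densAt_vadd_sub (a : O) (B : Set O) :
    Tendsto (fun N => densAt I (a +ᵥ B) N - densAt I B N) atTop (𝓝 0) := by
  refine squeeze_zero_norm (fun N => ?_) (hI.tendsto_ncard_symmDiff_div (-a))
  have hcount : ((a +ᵥ B) ∩ I N).ncard = (B ∩ (-a +ᵥ I N)).ncard := by
    rw [← Set.ncard_vadd_set (-a), Set.vadd_set_inter, neg_vadd_vadd]
  rw [densAt, densAt, hcount, ← sub_div, norm_div, Real.norm_eq_abs, Real.norm_natCast]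
  exact div_le_div_of_nonneg_right
    (abs_ncard_inter_sub_le B (hI.1 N) ((hI.1 N).vadd_set)) (Nat.cast_nonneg _)

lemma IsFolner.upperDensity_vadd_le (a : O) (B : Set O) :
    upperDensity I (a +ᵥ B) ≤ upperDensity I B := by
  have h := hI.tendsto_densAt_vadd_sub a B
  simp only [upperDensity_eq_limsup_densAt]
  calc limsup (densAt I (a +ᵥ B)) atTop
        = limsup (densAt I B + fun N => densAt I (a +ᵥ B) N - densAt I B N) atTop := by
          congr 1; ext N; simp
    _ ≤ limsup (densAt I B) atTop
          + limsup (fun N => densAt I (a +ᵥ B) N - densAt I B N) atTop :=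
        limsup_add_le (isBoundedUnder_ge_densAt I B) (isBoundedUnder_le_densAt I B)
          h.isCoboundedUnder_le h.isBoundedUnder_le
    _ = limsup (densAt I B) atTop := by rw [h.limsup_eq, add_zero]

lemma IsFolner.upperDensity_vadd (a : O) (B : Set O) :
    upperDensity I (a +ᵥ B) = upperDensity I B :=
  (hI.upperDensity_vadd_le a B).antisymm <| by
    simpa using hI.upperDensity_vadd_le (-a) (a +ᵥ B)

theorem IsFolner.hasDensity_preimage_s11 {Q : Type} [AddCommGroup Q] [Finite Q] (π : O →+ Q)
    (hπ : Function.Surjective π) (B : Set Q) :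
    HasDensity I (π ⁻¹' B) (Nat.card B / Nat.card Q) := by
  classical
  have := Fintype.ofFinite Q
  set f : Q → ℕ → ℝ := fun q => densAt I (π ⁻¹' {q})
  have hsum : ∀ (s : Finset Q) N, densAt I (π ⁻¹' s) N = ∑ q ∈ s, f q N := fun s N => by
    rw [← Set.biUnion_preimage_singleton, Finset.set_biUnion_coe]
    exact densAt_biUnion s (fun q _ q' _ hqq' => Set.disjoint_singleton.2 hqq' |>.preimage π)
      (hI.1 N)
  have htotal : ∀ N, ∑ q, f q N = 1 := fun N => by
    rw [← hsum, Finset.coe_univ, Set.preimage_univ, hI.densAt_univ]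
  have hfibers : ∀ q q', Tendsto (fun N => f q N - f q' N) atTop (𝓝 0) := fun q q' => by
    obtain ⟨h, hh⟩ := hπ (q - q')
    have htrans : π ⁻¹' {q} = h +ᵥ π ⁻¹' {q'} := by
      ext x
      rw [Set.mem_vadd_set_iff_neg_vadd_mem, Set.mem_preimage, Set.mem_preimage,
        Set.mem_singleton_iff, Set.mem_singleton_iff, vadd_eq_add, map_add, map_neg, hh,
        neg_add_eq_iff_eq_add, sub_add_cancel]
    simpa only [f, htrans] using hI.tendsto_densAt_vadd_sub h (π ⁻¹' {q'})
  have hfiber : ∀ q, Tendsto (f q) atTop (𝓝 (1 / Nat.card Q)) := fun q => by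
    have hlim := ((tendsto_finsetSum Finset.univ fun q' _ => hfibers q q').const_add 1).div_const
      (Nat.card Q : ℝ)
    simp only [Finset.sum_const_zero, add_zero] at hlim
    refine hlim.congr fun N => ?_
    rw [Finset.sum_sub_distrib, htotal, Finset.sum_const, Finset.card_univ, nsmul_eq_mul,
      ← Nat.card_eq_fintype_card]
    field_simp
    ring
  have hlim := tendsto_finsetSum B.toFinset fun q _ => hfiber q
  rw [Finset.sum_const, nsmul_eq_mul, mul_one_div, ← Nat.card_eq_card_toFinset] at hlim
  rw [hasDensity_iff_tendsto_densAt]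
  exact hlim.congr fun N => by rw [← hsum, Set.coe_toFinset]

lemma IsFolner.eventually_card_le_ncard (F : Finset O) :
    ∀ᶠ N in atTop, F.card ≤ (I N).ncard := by
  have hsmall : ∀ᶠ N in atTop,
      ∑ x ∈ F, (((-x +ᵥ I N) ∆ I N).ncard : ℝ) / (I N).ncard < 1 := by
    have h := tendsto_finsetSum F fun x _ => hI.tendsto_ncard_symmDiff_div (-x)
    rw [Finset.sum_const_zero] at h
    exact h.eventually (gt_mem_nhds one_pos)
  filter_upwards [hsmall] with N hN
  -- the translates `-x +ᵥ I N`, `x ∈ F`, miss fewer than `|I N|` points of `I N` in total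
  obtain ⟨y, hy⟩ : ∃ y ∈ I N, ∀ x ∈ F, x + y ∈ I N := by
    by_contra! h
    have hcover : I N ⊆ ⋃ x ∈ F, (-x +ᵥ I N) ∆ I N := fun y hy => by
      obtain ⟨x, hx, hxy⟩ := h y hy
      refine Set.mem_biUnion hx (Or.inr ⟨hy, ?_⟩)
      rwa [Set.mem_vadd_set_iff_neg_vadd_mem, neg_neg, vadd_eq_add]
    have hcard : ((I N).ncard : ℝ) ≤ ∑ x ∈ F, (((-x +ᵥ I N) ∆ I N).ncard : ℝ) := by
      exact_mod_cast (Set.ncard_le_ncard hcover (F.finite_toSet.biUnion fun x _ =>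
        ((hI.1 N).vadd_set.sdiff).union (hI.1 N).sdiff)).trans (F.set_ncard_biUnion_le _)
    rw [← Finset.sum_div, div_lt_one (mod_cast hI.ncard_pos N)] at hN
    linarith
  calc F.card = ((· + y) '' (F : Set O)).ncard := by
        rw [Set.ncard_image_of_injective _ (add_left_injective y), Set.ncard_coe_finset]
    _ ≤ (I N).ncard :=
        Set.ncard_le_ncard (Set.image_subset_iff.2 fun x hx => hy.2 x hx) (hI.1 N)

lemma IsFolner.tendsto_ncard_atTop [Infinite O] : Tendsto (fun N => (I N).ncard) atTop atTop :=
  tendsto_atTop.2 fun k => by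
    obtain ⟨F, rfl⟩ := Infinite.exists_subset_card_eq O k
    exact hI.eventually_card_le_ncard F

lemma HasDensity.infinite [Infinite O] {T : Set O} {d : ℝ} (hT : HasDensity I T d)
    (hd : 0 < d) : T.Infinite := fun hfin => by
  have hle : ∀ N, densAt I T N ≤ T.ncard / (I N).ncard := fun N =>
    div_le_div_of_nonneg_right (mod_cast Set.ncard_le_ncard Set.inter_subset_left hfin)
      (Nat.cast_nonneg _)
  have h0 : Tendsto (densAt I T) atTop (𝓝 0) := squeeze_zero (densAt_nonneg I T) hle
    (tendsto_const_nhds.div_atTop (tendsto_natCast_atTop_atTop.comp hI.tendsto_ncard_atTop))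
  exact hd.ne' (tendsto_nhds_unique ((hasDensity_iff_tendsto_densAt I T d).1 hT) h0)

end Folner

section PartialProducts

variable {x : ℕ → ℝ}

lemma one_sub_sum_le_prod_one_sub {ι : Type*} (s : Finset ι) {y : ι → ℝ}
    (h0 : ∀ i ∈ s, 0 ≤ y i) (h1 : ∀ i ∈ s, y i ≤ 1) :
    1 - ∑ i ∈ s, y i ≤ ∏ i ∈ s, (1 - y i) := by
  classical
  induction s using Finset.induction_on with
  | empty => simp
  | insert a s ha ih =>
    rw [Finset.sum_insert ha, Finset.prod_insert ha]
    have ih := ih (fun i hi => h0 i (Finset.mem_insert_of_mem hi))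
      (fun i hi => h1 i (Finset.mem_insert_of_mem hi))
    have hs0 : 0 ≤ ∑ i ∈ s, y i :=
      Finset.sum_nonneg fun i hi => h0 i (Finset.mem_insert_of_mem hi)
    have ha0 := h0 a (Finset.mem_insert_self a s)
    have ha1 := h1 a (Finset.mem_insert_self a s)
    nlinarith

lemma antitone_prod_range_one_sub (h0 : ∀ i, 0 ≤ x i) (h1 : ∀ i, x i ≤ 1) :
    Antitone fun L => ∏ i ∈ Finset.range L, (1 - x i) :=
  antitone_nat_of_succ_le fun L => by
    rw [Finset.prod_range_succ]
    exact mul_le_of_le_one_right (Finset.prod_nonneg fun i _ => sub_nonneg.2 (h1 i))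
      (sub_le_self _ (h0 L))

lemma tendsto_prod_range_one_sub (h0 : ∀ i, 0 ≤ x i) (h1 : ∀ i, x i ≤ 1) :
    Tendsto (fun L => ∏ i ∈ Finset.range L, (1 - x i)) atTop
      (𝓝 (⨅ L, ∏ i ∈ Finset.range L, (1 - x i))) :=
  tendsto_atTop_ciInf (antitone_prod_range_one_sub h0 h1)
    ⟨0, by rintro _ ⟨L, rfl⟩; exact Finset.prod_nonneg fun i _ => sub_nonneg.2 (h1 i)⟩

lemma iInf_prod_range_one_sub_pos (h0 : ∀ i, 0 ≤ x i) (h1 : ∀ i, x i < 1) (hx : Summable x) :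
    0 < ⨅ L, ∏ i ∈ Finset.range L, (1 - x i) := by
  set P : ℕ → ℝ := fun L => ∏ i ∈ Finset.range L, (1 - x i)
  have hP : ∀ L, 0 < P L := fun L => Finset.prod_pos fun i _ => sub_pos.2 (h1 i)
  -- beyond a point `L₀` where the tail sum is `< 1/2`, the partial products stay `≥ P L₀ / 2`
  obtain ⟨L₀, hL₀⟩ := ((tendsto_sum_nat_add x).eventually (gt_mem_nhds one_half_pos)).exists
  have htail : ∀ L, P L₀ / 2 ≤ P L := fun L => by
    rcases le_total L L₀ with hL | hL
    · linarith [antitone_prod_range_one_sub h0 (fun i => (h1 i).le) hL, hP L₀]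
    · have hsum : ∑ i ∈ Finset.Ico L₀ L, x i ≤ 1 / 2 := by
        rw [Finset.sum_Ico_eq_sum_range]
        refine le_trans ?_ hL₀.le
        simp_rw [add_comm L₀]
        exact hx.comp_injective (add_left_injective L₀) |>.sum_le_tsum _ fun i _ => h0 _
      have hsplit : P L = P L₀ * ∏ i ∈ Finset.Ico L₀ L, (1 - x i) :=
        (Finset.prod_range_mul_prod_Ico _ hL).symm
      have := one_sub_sum_le_prod_one_sub (Finset.Ico L₀ L) (fun i _ => h0 i)
        (fun i _ => (h1 i).le)
      rw [hsplit]
      nlinarith [hP L₀]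
  exact (half_pos (hP L₀)).trans_le (le_ciInf htail)

end PartialProducts

lemma ncard_add_le_mul {G : Type*} [Add G] {s t : Set G} (hs : s.Finite) (ht : t.Finite) :
    (s + t).ncard ≤ s.ncard * t.ncard := by
  rw [← Set.image2_add, ← Set.image_prod, ← Set.ncard_prod]
  exact Set.ncard_image_le (hs.prod ht)

namespace Sieve

variable (S : Sieve O)

lemma RSet_eq_preimage_image (i : ℕ) :
    S.RSet i = Ideal.Quotient.mk (S.b i) ⁻¹' (Ideal.Quotient.mk (S.b i) '' S.RSet i) := by
  refine (Set.subset_preimage_image _ _).antisymm ?_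
  rintro x ⟨_, ⟨g, hg, c, hc, rfl⟩, hx⟩
  exact ⟨g, hg, c + (x - (g + c)), add_mem hc (Ideal.Quotient.eq.1 hx.symm), by ring⟩

lemma mk_mem_image_RSet_iff {i : ℕ} {x : O} :
    Ideal.Quotient.mk (S.b i) x ∈ Ideal.Quotient.mk (S.b i) '' S.RSet i ↔ x ∈ S.RSet i := by
  conv_rhs => rw [S.RSet_eq_preimage_image]
  rfl

lemma normb_pos (i : ℕ) : 0 < S.normb i :=
  have := S.finQuot i
  Nat.card_pos

lemma cardR_lt_normb (i : ℕ) : S.cardR i < S.normb i := by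
  have := S.finQuot i
  rw [cardR, normb, Nat.card_coe_set_eq, ← Set.ncard_univ]
  refine Set.ncard_lt_ncard (Set.ssubset_univ_iff.2 fun h => S.ne_univ i ?_)
  rw [← RSet, S.RSet_eq_preimage_image, h, Set.preimage_univ]

lemma cardR_div_normb_nonneg (i : ℕ) : 0 ≤ (S.cardR i : ℝ) / S.normb i := by positivity

lemma cardR_div_normb_lt_one (i : ℕ) : (S.cardR i : ℝ) / S.normb i < 1 :=
  (div_lt_one (mod_cast S.normb_pos i)).2 (mod_cast S.cardR_lt_normb i)

lemma tendsto_prodDensity :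
    Tendsto (fun L => ∏ i ∈ Finset.range L, (1 - (S.cardR i : ℝ) / S.normb i)) atTop
      (𝓝 S.prodDensity) :=
  tendsto_prod_range_one_sub S.cardR_div_normb_nonneg fun i => (S.cardR_div_normb_lt_one i).le

lemma prodDensity_pos (hS : S.IsErdos) : 0 < S.prodDensity :=
  iInf_prod_range_one_sub_pos S.cardR_div_normb_nonneg S.cardR_div_normb_lt_one hS

theorem hasDensity_compl_unionLt {I : ℕ → Set O} (hI : IsFolner I) (L : ℕ) :
    HasDensity I (unionLt S.RSet L)ᶜ
      (∏ i ∈ Finset.range L, (1 - (S.cardR i : ℝ) / S.normb i)) := by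
  have := S.finQuot
  let π := (RingHom.pi fun i : Fin L => Ideal.Quotient.mk (S.b i)).toAddMonoidHom
  have hπ : Function.Surjective π := fun v => by
    obtain ⟨r, hr⟩ := Ideal.pi_quotient_surjective (I := fun i : Fin L => S.b i)
      (fun i j hij => Ideal.isCoprime_iff_sup_eq.2 (S.coprime i j (Fin.val_injective.ne hij))) v
    exact ⟨r, funext hr⟩
  let t : ∀ i : Fin L, Set (O ⧸ S.b i) := fun i => (Ideal.Quotient.mk (S.b i) '' S.RSet i)ᶜ
  have hpre : π ⁻¹' Set.univ.pi t = (unionLt S.RSet L)ᶜ := by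
    ext x
    simp only [Set.mem_preimage, Set.mem_univ_pi, t, Set.mem_compl_iff, unionLt, Set.mem_iUnion,
      not_exists]
    exact ⟨fun h i hi => S.mk_mem_image_RSet_iff.not.1 (h ⟨i, hi⟩),
      fun h i => S.mk_mem_image_RSet_iff.not.2 (h i i.2)⟩
  have hcard : ∀ i : Fin L, (Nat.card (t i) : ℝ) = S.normb i - S.cardR i := fun i => by
    have h := Set.ncard_add_ncard_compl (Ideal.Quotient.mk (S.b i) '' S.RSet i)
    rw [cardR, normb, Nat.card_coe_set_eq, Nat.card_coe_set_eq, ← h]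
    push_cast
    ring
  have hd := hI.hasDensity_preimage_s11 π hπ (Set.univ.pi t)
  rw [hpre] at hd
  convert hd using 1
  rw [Nat.card_congr (Equiv.Set.univPi t), Nat.card_pi, Nat.card_pi, Nat.cast_prod,
    Nat.cast_prod, ← Finset.prod_div_distrib, ← Fin.prod_univ_eq_prod_range]
  refine Finset.prod_congr rfl fun i _ => ?_
  rw [hcard, ← normb, sub_div, div_self (mod_cast (S.normb_pos i).ne')]

lemma FR_subset_compl_unionLt (L : ℕ) : S.FR ⊆ (unionLt S.RSet L)ᶜ :=
  Set.compl_subset_compl.2 (Set.iUnion₂_subset fun i _ => Set.subset_iUnion S.RSet i)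

lemma compl_unionLt_sdiff_FR (L : ℕ) :
    (unionLt S.RSet L)ᶜ \ S.FR = unionGe S.RSet L \ unionLt S.RSet L := by
  ext x
  simp only [FR, unionLt, unionGe, Set.mem_sdiff, Set.mem_compl_iff, Set.mem_iUnion, not_not,
    exists_prop]
  constructor
  · rintro ⟨h, i, hi⟩
    exact ⟨⟨i, le_of_not_gt fun hiL => h ⟨i, hiL, hi⟩, hi⟩, h⟩
  · rintro ⟨⟨i, -, hi⟩, h⟩
    exact ⟨h, i, hi⟩

theorem hasDensity_FR {I : ℕ → Set O} (hI : IsFolner I) (hW : WeakLightTailsFam I S.RSet) :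
    HasDensity I S.FR S.prodDensity :=
  hasDensity_of_tendsto_upperDensity_sdiff S.FR_subset_compl_unionLt
    (S.hasDensity_compl_unionLt hI) S.tendsto_prodDensity
    (by simp only [S.compl_unionLt_sdiff_FR]; exact hW)

open Classical in
def shift (A : Finset O) (hA : S.Admissible ↑A) : Sieve O where
  b := S.b
  gen i := -A + S.gen i
  coprime := S.coprime
  finQuot := S.finQuot
  ne_univ i := by
    rw [Finset.coe_add, Finset.coe_neg, add_assoc]
    exact hA i

lemma cardShift_le (A : Finset O) (i : ℕ) : S.cardShift ↑A i ≤ A.card * S.cardR i := by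
  classical
  have := S.finQuot i
  rw [cardShift, cardR, ← Finset.coe_neg, Set.image_add, Nat.card_coe_set_eq, Nat.card_coe_set_eq]
  calc _ ≤ (Ideal.Quotient.mk (S.b i) '' ↑(-A)).ncard
          * (Ideal.Quotient.mk (S.b i) '' S.RSet i).ncard :=
        ncard_add_le_mul (Set.toFinite _) (Set.toFinite _)
    _ ≤ A.card * (Ideal.Quotient.mk (S.b i) '' S.RSet i).ncard := by
        gcongr
        calc _ ≤ (↑(-A) : Set O).ncard := Set.ncard_image_le (Set.toFinite _)
          _ = A.card := by rw [Set.ncard_coe_finset, Finset.card_neg]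

variable {A : Finset O} (hA : S.Admissible ↑A)
include hA

lemma RSet_shift (i : ℕ) : (S.shift A hA).RSet i = -↑A + S.RSet i := by
  classical
  simp only [RSet, shift, Finset.coe_add, Finset.coe_neg, add_assoc]

lemma mem_RSet_shift {i : ℕ} {x : O} :
    x ∈ (S.shift A hA).RSet i ↔ ∃ a ∈ A, x + a ∈ S.RSet i := by
  rw [S.RSet_shift hA, Set.mem_add]
  constructor
  · rintro ⟨u, hu, r, hr, rfl⟩
    exact ⟨-u, hu, by rwa [add_neg_cancel_comm]⟩
  · rintro ⟨a, ha, hxa⟩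
    exact ⟨-a, by rwa [Set.mem_neg, neg_neg], x + a, hxa, by abel⟩

lemma FR_shift : (S.shift A hA).FR = {x | ∀ a ∈ A, x + a ∈ S.FR} := by
  ext x
  simp only [FR, Set.mem_compl_iff, Set.mem_iUnion, S.mem_RSet_shift hA, Set.mem_ofPred_eq]
  grind

lemma prodDensity_shift : (S.shift A hA).prodDensity = S.prodDensityShift ↑A := by
  simp only [prodDensity, prodDensityShift, cardR, cardShift, S.RSet_shift hA]
  rfl

lemma isErdos_shift (hS : S.IsErdos) : (S.shift A hA).IsErdos := by
  refine Summable.of_nonneg_of_le (fun i => by positivity) (fun i => ?_)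
    (Summable.mul_left (A.card : ℝ) (f := fun i => (S.cardR i : ℝ) / S.normb i) hS)
  have hcard : (S.shift A hA).cardR i = S.cardShift ↑A i := by
    rw [cardR, cardShift, S.RSet_shift hA]
    rfl
  rw [hcard, ← mul_div_assoc]
  exact div_le_div_of_nonneg_right (mod_cast S.cardShift_le A i) (Nat.cast_nonneg _)

lemma tails_shift_subset (L : ℕ) :
    unionGe (S.shift A hA).RSet L \ unionLt (S.shift A hA).RSet L ⊆
      ⋃ a ∈ A, -a +ᵥ (unionGe S.RSet L \ unionLt S.RSet L) := by
  rintro x ⟨hge, hlt⟩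
  simp only [unionGe, unionLt, Set.mem_iUnion, S.mem_RSet_shift hA, exists_prop] at hge hlt
  obtain ⟨i, hiL, a, ha, hxa⟩ := hge
  refine Set.mem_biUnion ha ?_
  rw [Set.mem_vadd_set_iff_neg_vadd_mem, neg_neg, vadd_eq_add, add_comm]
  simp only [unionGe, unionLt, Set.mem_sdiff, Set.mem_iUnion, exists_prop]
  exact ⟨⟨i, hiL, hxa⟩, fun ⟨j, hjL, hxj⟩ => hlt ⟨j, hjL, a, ha, hxj⟩⟩

lemma weakLightTailsFam_shift {I : ℕ → Set O} (hI : IsFolner I)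
    (hW : WeakLightTailsFam I S.RSet) : WeakLightTailsFam I (S.shift A hA).RSet := by
  refine squeeze_zero (fun L => upperDensity_nonneg _ _) (fun L => ?_)
    (by simpa using hW.const_mul (A.card : ℝ))
  calc _ ≤ upperDensity I (⋃ a ∈ A, -a +ᵥ (unionGe S.RSet L \ unionLt S.RSet L)) :=
        upperDensity_mono (S.tails_shift_subset hA L)
    _ ≤ _ := upperDensity_biUnion_le A _
    _ = _ := by simp only [hI.upperDensity_vadd, Finset.sum_const, nsmul_eq_mul]

end Sieve

/-- **Density of pattern occurrences.** If `R` is an Erdős sieve with weak light tails for a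
Følner sequence `I` and `A` is a finite `R`-admissible set, then the set of `x` with
`x + A ⊆ F_R` has density `∏ (1 - |-A + R_i|/N(b_i)) > 0` along `I`; in particular it is
infinite. -/
theorem pattern_density_pos
    {m : ℕ} (hm : 0 < m) (K : Fin m → Type) [∀ j, Field (K j)]
    [∀ j, NumberField (K j)]
    (S : Sieve (OK K)) (I : ℕ → Set (OK K)) (hI : IsFolner I)
    (hWLT : S.HasWeakLightTails I) (A : Finset (OK K))
    (hAdm : S.Admissible (↑A : Set (OK K))) :
    HasDensity I {x : OK K | ∀ a ∈ A, x + a ∈ S.FR} (S.prodDensityShift (↑A : Set (OK K)))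
    ∧ 0 < S.prodDensityShift (↑A : Set (OK K))
    ∧ {x : OK K | ∀ a ∈ A, x + a ∈ S.FR}.Infinite := by
  have hT : HasDensity I {x | ∀ a ∈ A, x + a ∈ S.FR} (S.prodDensityShift ↑A) := by
    rw [← S.FR_shift hAdm, ← S.prodDensity_shift hAdm]
    exact (S.shift A hAdm).hasDensity_FR hI (S.weakLightTailsFam_shift hAdm hI hWLT.2)
  have hpos : 0 < S.prodDensityShift ↑A :=
    S.prodDensity_shift hAdm ▸ (S.shift A hAdm).prodDensity_pos (S.isErdos_shift hAdm hWLT.1)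
  have : Infinite (OK K) := Pi.infinite_of_exists_right ⟨0, hm⟩
  exact ⟨hT, hpos, hT.infinite hI hpos⟩

end ErdosSieve
end
end
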